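/- arXiv:2103.15209 — 10 statements merged into one kernel-verified Lean document; each statement's English description precedes it below -/
import Mathlib

section
/- Consider the weighted exponential risk L(θ;w) of data with ‖x_i‖₂ ≤ 1 and weights w_i > 0, and one gradient descent step θ^(t+1) = θ^(t) − η_t ∇_θ L(θ^(t);w) with stepsize satisfying η_t L(θ^(t);w) ≤ 1. Then L(θ^(t+1);w) ≤ L(θ^(t);w) · (1 − η_t L(θ^(t);w) (1 − η_t L(θ^(t);w)/2) (‖∇_θ L(θ^(t);w)‖₂ / L(θ^(t);w))²). -/
open scoped RealInnerProductSpace BigOperators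

lemma aux_nonneg {f f' : ℝ → ℝ} (hf : ∀ t, HasDerivAt f (f' t) t) (h0 : f 0 = 0)
    (hd : ∀ t, 0 < t → 0 ≤ f' t) : ∀ t, 0 ≤ t → 0 ≤ f t := by
  intro t ht
  have hmono : MonotoneOn f (Set.Ici 0) := by
    apply monotoneOn_of_deriv_nonneg (convex_Ici 0)
    · exact fun s _ => (hf s).continuousAt.continuousWithinAt
    · exact fun s _ => ((hf s).differentiableAt).differentiableWithinAt
    · intro s hs
      rw [interior_Ici] at hs
      rw [(hf s).deriv]
      exact hd s hs
  simpa [h0] using hmono Set.self_mem_Ici (Set.mem_Ici.mpr ht) ht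

lemma aux_sinh_ge (t : ℝ) (ht : 0 ≤ t) : t ≤ Real.sinh t := by
  rcases eq_or_lt_of_le ht with h | h
  · simp [← h]
  · exact le_of_lt (Real.self_lt_sinh_iff.2 h)

lemma aux_cosh_ge (t : ℝ) (ht : 0 ≤ t) : 0 ≤ Real.cosh t - 1 - t ^ 2 / 2 := by
  refine aux_nonneg (f := fun t => Real.cosh t - 1 - t ^ 2 / 2)
    (f' := fun t => Real.sinh t - t) (fun s => ?_) ?_ ?_ t ht
  · have H := ((Real.hasDerivAt_cosh s).sub_const 1).sub ((hasDerivAt_pow 2 s).div_const 2)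
    convert H using 1
    · rfl
    · rfl
    · rfl
    · ring
  · norm_num
  · intro s hs
    show 0 ≤ Real.sinh s - s
    simpa using aux_sinh_ge s hs.le

lemma aux_key (t : ℝ) (ht : 0 ≤ t) :
    0 ≤ t * Real.sinh t - Real.cosh t + 1 - t ^ 2 / 2 := by
  refine aux_nonneg (f := fun t => t * Real.sinh t - Real.cosh t + 1 - t ^ 2 / 2)
    (f' := fun t => t * Real.cosh t - t) (fun s => ?_) ?_ ?_ t ht
  · have H := ((((hasDerivAt_id' (x := s)).mul (Real.hasDerivAt_sinh s)).sub
      (Real.hasDerivAt_cosh s)).add_const 1).sub ((hasDerivAt_pow 2 s).div_const 2)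
    convert H using 1
    · rfl
    · rfl
    · rfl
    · ring
  · norm_num
  · intro s hs
    show 0 ≤ s * Real.cosh s - s
    nlinarith [Real.one_le_cosh s]

lemma aux_chord {c z : ℝ} (hc : 0 < c) (h1 : -c ≤ z) (h2 : z ≤ c) :
    Real.exp z ≤ Real.cosh c + Real.sinh c / c * z := by
  have ha : (0:ℝ) ≤ (c - z) / (2 * c) := div_nonneg (by linarith) (by linarith)
  have hb : (0:ℝ) ≤ (c + z) / (2 * c) := div_nonneg (by linarith) (by linarith)
  have hab : (c - z) / (2 * c) + (c + z) / (2 * c) = 1 := by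
    field_simp
    ring
  have h := convexOn_exp.2 (Set.mem_univ (-c)) (Set.mem_univ c) ha hb hab
  simp only [smul_eq_mul] at h
  have heq : (c - z) / (2 * c) * (-c) + (c + z) / (2 * c) * c = z := by
    field_simp
    ring
  rw [heq] at h
  have hre : Real.cosh c + Real.sinh c / c * z
      = (c - z) / (2 * c) * Real.exp (-c) + (c + z) / (2 * c) * Real.exp c := by
    rw [Real.cosh_eq, Real.sinh_eq]
    field_simp
    ring
  rw [hre]
  exact h

/-- One-step multiplicative decrease of the weighted exponential risk under gradient
descent with stepsize satisfying `η L(θ;w) ≤ 1`. -/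
theorem stmt_5 (n d : ℕ) (hn : 0 < n)
    (x : Fin n → EuclideanSpace ℝ (Fin d)) (hx : ∀ i, ‖x i‖ ≤ 1)
    (y : Fin n → ℝ) (hy : ∀ i, y i = 1 ∨ y i = -1)
    (w : Fin n → ℝ) (hw : ∀ i, 0 < w i)
    (L : EuclideanSpace ℝ (Fin d) → ℝ)
    (hL : ∀ θ, L θ = (1 / (n : ℝ)) * ∑ i, w i * Real.exp (-(y i * ⟪θ, x i⟫)))
    (η : ℝ) (hη : 0 < η)
    (θ θ' : EuclideanSpace ℝ (Fin d))
    (hstep : θ' = θ - η • gradient L θ)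
    (hηL : η * L θ ≤ 1) :
    L θ' ≤ L θ * (1 - η * L θ * (1 - η * L θ / 2) * (‖gradient L θ‖ / L θ) ^ 2) := by
  classical
  set g : EuclideanSpace ℝ (Fin d) := gradient L θ with hgdef
  -- losses and correlations
  set ℓ : Fin n → ℝ := fun i => w i * Real.exp (-(y i * ⟪θ, x i⟫)) with hℓ
  set u : Fin n → ℝ := fun i => y i * ⟪x i, g⟫ with hu
  have hninv : (0:ℝ) < 1 / (n:ℝ) := by
    have : (0:ℝ) < (n:ℝ) := by exact_mod_cast hn
    positivity
  have hℓpos : ∀ i, 0 < ℓ i := fun i => mul_pos (hw i) (Real.exp_pos _)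
  have hLθ : L θ = (1 / (n:ℝ)) * ∑ i, ℓ i := hL θ
  have hLpos : 0 < L θ := by
    rw [hLθ]
    refine mul_pos hninv (Finset.sum_pos (fun i _ => hℓpos i) ?_)
    exact ⟨⟨0, hn⟩, Finset.mem_univ _⟩
  -- derivative of L
  have hfder : HasFDerivAt L
      ((1 / (n:ℝ)) • ∑ i : Fin n,
        (w i * Real.exp (-(y i * ⟪x i, θ⟫)) * (-(y i))) • (innerSL ℝ (x i))) θ := by
    have hLfun : L = fun ϑ : EuclideanSpace ℝ (Fin d) => (1 / (n:ℝ)) * ∑ i, w i * Real.exp (-(y i * ⟪x i, ϑ⟫)) := by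
      funext ϑ
      rw [hL]
      congr 1
      exact Finset.sum_congr rfl fun i _ => by rw [real_inner_comm]
    rw [hLfun]
    refine HasFDerivAt.const_mul ?_ _
    refine HasFDerivAt.fun_sum fun i _ => ?_
    have hlin : HasFDerivAt (fun ϑ : EuclideanSpace ℝ (Fin d) => (⟪x i, ϑ⟫ : ℝ)) (innerSL ℝ (x i)) θ := by
      have h := (innerSL ℝ (x i)).hasFDerivAt (x := θ)
      rwa [coe_innerSL_apply] at h
    have hscal : HasDerivAt (fun s : ℝ => w i * Real.exp (-(y i * s)))
        (w i * Real.exp (-(y i * ⟪x i, θ⟫)) * (-(y i))) (⟪x i, θ⟫ : ℝ) := by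
      have h1 : HasDerivAt (fun s : ℝ => -(y i * s)) (-(y i)) (⟪x i, θ⟫ : ℝ) := by
        simpa using ((hasDerivAt_id' (x := (⟪x i, θ⟫ : ℝ))).const_mul (y i)).fun_neg
      simpa [mul_assoc] using (h1.exp).const_mul (w i)
    exact hscal.comp_hasFDerivAt θ hlin
  have hginner : ∀ v : EuclideanSpace ℝ (Fin d), (⟪g, v⟫ : ℝ)
      = (1 / (n:ℝ)) * ∑ i, (w i * Real.exp (-(y i * ⟪x i, θ⟫)) * (-(y i))) * ⟪x i, v⟫ := by
    intro v
    have : g = (InnerProductSpace.toDual ℝ (EuclideanSpace ℝ (Fin d))).symm (fderiv ℝ L θ) := rfl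
    rw [this, InnerProductSpace.toDual_symm_apply, hfder.fderiv]
    simp [ContinuousLinearMap.sum_apply, Finset.mul_sum]
  -- key correlation identity
  have hsum_u : (1 / (n:ℝ)) * ∑ i, ℓ i * u i = -‖g‖ ^ 2 := by
    have h := hginner g
    rw [real_inner_self_eq_norm_sq] at h
    have hterm : ∀ i ∈ Finset.univ,
        (w i * Real.exp (-(y i * ⟪x i, θ⟫)) * (-(y i))) * (⟪x i, g⟫ : ℝ) = -(ℓ i * u i) := by
      intro i _
      rw [hℓ, hu]
      simp only
      rw [real_inner_comm (x i) θ]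
      ring
    rw [Finset.sum_congr rfl hterm, Finset.sum_neg_distrib] at h
    rw [h]
    ring
  -- cauchy-schwarz bound on u
  have huabs : ∀ i, |u i| ≤ ‖g‖ := by
    intro i
    rw [hu]
    simp only
    rw [abs_mul]
    have hyi : |y i| = 1 := by rcases hy i with h | h <;> simp [h]
    rw [hyi, one_mul]
    calc |(⟪x i, g⟫ : ℝ)| ≤ ‖x i‖ * ‖g‖ := abs_real_inner_le_norm _ _
      _ ≤ 1 * ‖g‖ := by
          exact mul_le_mul_of_nonneg_right (hx i) (norm_nonneg _)
      _ = ‖g‖ := one_mul _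
  -- risk at new point
  have hLθ' : L θ' = (1 / (n:ℝ)) * ∑ i, ℓ i * Real.exp (η * u i) := by
    rw [hL]
    congr 1
    refine Finset.sum_congr rfl fun i _ => ?_
    have hip : (⟪θ', x i⟫ : ℝ) = ⟪θ, x i⟫ - η * ⟪x i, g⟫ := by
      rw [hstep, inner_sub_left, real_inner_smul_left, real_inner_comm g (x i)]
    rw [hip, hℓ, hu]
    simp only
    rw [show -(y i * ((⟪θ, x i⟫ : ℝ) - η * ⟪x i, g⟫))
        = -(y i * ⟪θ, x i⟫) + η * (y i * ⟪x i, g⟫) by ring, Real.exp_add]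
    ring
  -- trivial case: zero gradient
  rcases eq_or_lt_of_le (norm_nonneg g) with hG0 | hGpos
  · have hg0 : g = 0 := norm_eq_zero.mp hG0.symm
    rw [hstep, hg0]
    simp
  -- main case
  set G := ‖g‖ with hGdef
  set c := η * G with hcdef
  have hc : 0 < c := mul_pos hη hGpos
  have hchord : ∀ i, Real.exp (η * u i) ≤ Real.cosh c + Real.sinh c / c * (η * u i) := by
    intro i
    have h1 : |η * u i| ≤ c := by
      rw [abs_mul, abs_of_pos hη, hcdef]
      exact mul_le_mul_of_nonneg_left (huabs i) hη.le
    exact aux_chord hc (neg_le_of_abs_le h1) (le_of_abs_le h1)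
  have hb1 : L θ' ≤ (1 / (n:ℝ)) * ∑ i, ℓ i * (Real.cosh c + Real.sinh c / c * (η * u i)) := by
    rw [hLθ']
    refine mul_le_mul_of_nonneg_left (Finset.sum_le_sum fun i _ => ?_) hninv.le
    exact mul_le_mul_of_nonneg_left (hchord i) (hℓpos i).le
  have hb2 : (1 / (n:ℝ)) * ∑ i, ℓ i * (Real.cosh c + Real.sinh c / c * (η * u i))
      = Real.cosh c * L θ + Real.sinh c / c * η * ((1 / (n:ℝ)) * ∑ i, ℓ i * u i) := by
    rw [hLθ]
    rw [show ∀ S T : ℝ, Real.cosh c * ((1 / (n:ℝ)) * S) + Real.sinh c / c * η * ((1 / (n:ℝ)) * T)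
        = (1 / (n:ℝ)) * (Real.cosh c * S + Real.sinh c / c * η * T) from fun S T => by ring]
    congr 1
    rw [Finset.mul_sum, Finset.mul_sum, ← Finset.sum_add_distrib]
    refine Finset.sum_congr rfl fun i _ => ?_
    ring
  have hb3 : L θ' ≤ Real.cosh c * L θ - Real.sinh c * G := by
    have := hb1.trans_eq hb2
    rw [hsum_u] at this
    have heq : Real.cosh c * L θ + Real.sinh c / c * η * -‖g‖ ^ 2
        = Real.cosh c * L θ - Real.sinh c * G := by
      rw [hcdef]
      field_simp
      ring
    linarith [this, heq.le, heq.ge]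
  -- final scalar inequality
  have hQ := aux_cosh_ge c hc.le
  have hP := aux_key c hc.le
  have hF1 : (Real.cosh c - 1 - c ^ 2 / 2) * (η * L θ) ≤ Real.cosh c - 1 - c ^ 2 / 2 :=
    mul_le_of_le_one_right hQ hηL
  have hRHS : L θ * (1 - η * L θ * (1 - η * L θ / 2) * (G / L θ) ^ 2)
      = L θ - η * G ^ 2 + η ^ 2 * G ^ 2 * L θ / 2 := by
    field_simp
    ring
  rw [hRHS]
  refine hb3.trans ?_
  rw [hcdef] at hF1 hP
  have hmul : η * (Real.cosh (η * G) * L θ - Real.sinh (η * G) * G)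
      ≤ η * (L θ - η * G ^ 2 + η ^ 2 * G ^ 2 * L θ / 2) := by
    linarith [hF1, hP]
  exact le_of_mul_le_mul_left hmul hη
end

section
/- Consider gradient descent θ^(j+1) = θ^(j) − η_j ∇_θ L(θ^(j);w) on the weighted exponential risk of data with ‖x_i‖₂ ≤ 1 and weights w_i > 0, with stepsizes satisfying η_j L(θ^(j);w) ≤ 1 for all j. Then for every t ≥ 1, L(θ^(t);w) ≤ L(θ^(0);w) · exp(−∑_{j<t} η_j L(θ^(j);w) (1 − η_j L(θ^(j);w)/2) (‖∇_θ L(θ^(j);w)‖₂ / L(θ^(j);w))²). -/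
open scoped RealInnerProductSpace BigOperators

open Finset in
lemma hoeff_fin {n : ℕ} (hn : 0 < n) (l z : Fin n → ℝ) (hl : ∀ i, 0 < l i)
    (c : ℝ) (hz : ∀ i, |z i| ≤ c) :
    ∑ i, l i * Real.exp (z i) ≤
      (∑ i, l i) * Real.exp ((∑ i, l i * z i) / (∑ i, l i) + c ^ 2 / 2) := by
  have hne : (Finset.univ : Finset (Fin n)).Nonempty := by
    have : Nonempty (Fin n) := Fin.pos_iff_nonempty.mp hn
    exact Finset.univ_nonempty
  set A : ℝ → ℝ := fun s => ∑ i, l i * Real.exp (s * z i) with hAdef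
  set B : ℝ → ℝ := fun s => ∑ i, l i * (z i * Real.exp (s * z i)) with hBdef
  set C : ℝ → ℝ := fun s => ∑ i, l i * (z i ^ 2 * Real.exp (s * z i)) with hCdef
  have hApos : ∀ s, 0 < A s := fun s =>
    Finset.sum_pos (fun i _ => mul_pos (hl i) (Real.exp_pos _)) hne
  have hexp : ∀ (i : Fin n) (s : ℝ),
      HasDerivAt (fun s : ℝ => Real.exp (s * z i)) (z i * Real.exp (s * z i)) s := by
    intro i s
    have h1 : HasDerivAt (fun s : ℝ => s * z i) (z i) s := by
      simpa using (hasDerivAt_id s).mul_const (z i)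
    simpa [mul_comm] using h1.exp
  have hAder : ∀ s, HasDerivAt A (B s) s := by
    intro s
    simpa [hAdef, hBdef] using
      HasDerivAt.fun_sum (fun i (_ : i ∈ Finset.univ) =>
        ((hexp i s).const_mul (l i)))
  have hBder : ∀ s, HasDerivAt B (C s) s := by
    intro s
    have : ∀ i ∈ Finset.univ, HasDerivAt (fun s => l i * (z i * Real.exp (s * z i)))
        (l i * (z i ^ 2 * Real.exp (s * z i))) s := by
      intro i _
      have := ((hexp i s).const_mul (z i)).const_mul (l i)
      exact this.congr_deriv (by ring)
    simpa [hBdef, hCdef] using HasDerivAt.fun_sum this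
  have hFder : ∀ s, HasDerivAt (fun s => Real.log (A s)) (B s / A s) s := by
    intro s
    exact (hAder s).log (hApos s).ne'
  have hGder : ∀ s, HasDerivAt (fun s => B s / A s)
      ((C s * A s - B s * B s) / (A s) ^ 2) s := by
    intro s
    exact (hBder s).div (hAder s) (hApos s).ne'
  have hCle : ∀ s, C s ≤ c ^ 2 * A s := by
    intro s
    rw [hCdef, Finset.mul_sum]
    apply Finset.sum_le_sum
    intro i _
    have hz2 : z i ^ 2 ≤ c ^ 2 := by
      have := sq_le_sq' (neg_le_of_abs_le (hz i)) (le_of_abs_le (hz i))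
      simpa using this
    have := mul_le_mul_of_nonneg_right hz2 (Real.exp_pos (s * z i)).le
    nlinarith [ (hl i), Real.exp_pos (s * z i)]
  have hsec : ∀ s, (C s * A s - B s * B s) / (A s) ^ 2 ≤ c ^ 2 := by
    intro s
    rw [div_le_iff₀ (pow_pos (hApos s) 2)]
    nlinarith [hCle s, hApos s, sq_nonneg (B s)]
  -- ψ = derivative of φ
  set ψ : ℝ → ℝ := fun s => B 0 / A 0 + c ^ 2 * s - B s / A s with hψdef
  have hψder : ∀ s, HasDerivAt ψ (c ^ 2 - (C s * A s - B s * B s) / (A s) ^ 2) s := by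
    intro s
    have h1 : HasDerivAt (fun s : ℝ => B 0 / A 0 + c ^ 2 * s) (c ^ 2) s := by
      simpa using (hasDerivAt_const s (B 0 / A 0)).fun_add ((hasDerivAt_id s).const_mul (c ^ 2))
    exact h1.sub (hGder s)
  have hψmono : Monotone ψ := by
    apply monotone_of_deriv_nonneg
    · exact fun s => (hψder s).differentiableAt
    · intro s
      rw [(hψder s).deriv]
      linarith [hsec s]
  have hψ0 : ψ 0 = 0 := by simp [hψdef]
  have hψnonneg : ∀ s, 0 ≤ s → 0 ≤ ψ s := by
    intro s hs
    rw [← hψ0]; exact hψmono hs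
  set φ : ℝ → ℝ := fun s => B 0 / A 0 * s + c ^ 2 / 2 * s ^ 2 + Real.log (A 0)
    - Real.log (A s) with hφdef
  have hφder : ∀ s, HasDerivAt φ (ψ s) s := by
    intro s
    have h1 : HasDerivAt (fun s : ℝ => B 0 / A 0 * s + c ^ 2 / 2 * s ^ 2 + Real.log (A 0))
        (B 0 / A 0 + c ^ 2 * s) s := by
      have ha : HasDerivAt (fun s : ℝ => B 0 / A 0 * s) (B 0 / A 0) s := by
        simpa using (hasDerivAt_id s).const_mul (B 0 / A 0)
      have hb : HasDerivAt (fun s : ℝ => c ^ 2 / 2 * s ^ 2) (c ^ 2 * s) s := by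
        have := (hasDerivAt_pow 2 s).const_mul (c ^ 2 / 2)
        exact this.congr_deriv (by ring)
      simpa using (ha.add hb).add_const (Real.log (A 0))
    exact h1.sub (hFder s)
  have hφmono : MonotoneOn φ (Set.Icc 0 1) := by
    apply monotoneOn_of_deriv_nonneg (convex_Icc 0 1)
    · exact fun s _ => (hφder s).differentiableAt.continuousAt.continuousWithinAt
    · intro s _
      exact (hφder s).differentiableAt.differentiableWithinAt
    · intro s hs
      rw [(hφder s).deriv]
      exact hψnonneg s (by simp at hs; linarith [hs.1])
  have hφ01 : φ 0 ≤ φ 1 := hφmono (by simp) (by simp) zero_le_one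
  have hφ0 : φ 0 = 0 := by simp [hφdef]
  rw [hφ0] at hφ01
  -- unfold φ 1
  have hlog : Real.log (A 1) ≤ B 0 / A 0 + c ^ 2 / 2 + Real.log (A 0) := by
    rw [hφdef] at hφ01
    simp only [one_pow, mul_one] at hφ01
    linarith
  have hA1 : A 1 = ∑ i, l i * Real.exp (z i) := by simp [hAdef]
  have hA0 : A 0 = ∑ i, l i := by simp [hAdef]
  have hB0 : B 0 = ∑ i, l i * z i := by simp [hBdef]
  calc ∑ i, l i * Real.exp (z i) = A 1 := hA1.symm
    _ = Real.exp (Real.log (A 1)) := (Real.exp_log (hApos 1)).symm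
    _ ≤ Real.exp (B 0 / A 0 + c ^ 2 / 2 + Real.log (A 0)) := Real.exp_le_exp.mpr hlog
    _ = (∑ i, l i) * Real.exp ((∑ i, l i * z i) / (∑ i, l i) + c ^ 2 / 2) := by
        rw [Real.exp_add, Real.exp_log (hApos 0), hA0, hB0]
        ring

lemma grad_formula {n d : ℕ} (x : Fin n → EuclideanSpace ℝ (Fin d)) (y w : Fin n → ℝ)
    (θ0 : EuclideanSpace ℝ (Fin d)) :
    HasGradientAt (fun θ : EuclideanSpace ℝ (Fin d) =>
        (1 / (n : ℝ)) * ∑ i, w i * Real.exp (-(y i * ⟪θ, x i⟫)))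
      (∑ i, (-((1 / (n : ℝ)) * w i * y i * Real.exp (-(y i * ⟪θ0, x i⟫)))) • x i) θ0 := by
  rw [hasGradientAt_iff_hasFDerivAt]
  have hterm : ∀ i : Fin n, HasFDerivAt
      (fun θ : EuclideanSpace ℝ (Fin d) => w i * Real.exp (-(y i * ⟪θ, x i⟫)))
      ((w i * (Real.exp (-(y i * ⟪θ0, x i⟫)) * (-(y i)))) • innerSL ℝ (x i)) θ0 := by
    intro i
    have h0 : HasFDerivAt (fun θ : EuclideanSpace ℝ (Fin d) => (⟪θ, x i⟫ : ℝ))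
        (innerSL ℝ (x i)) θ0 := by
      have heq : (fun θ : EuclideanSpace ℝ (Fin d) => (⟪θ, x i⟫ : ℝ))
          = fun θ => (⟪x i, θ⟫ : ℝ) := funext fun θ => real_inner_comm _ _
      rw [heq]
      exact (innerSL ℝ (x i)).hasFDerivAt
    have h1 : HasFDerivAt (fun θ : EuclideanSpace ℝ (Fin d) => -(y i * ⟪θ, x i⟫))
        ((-(y i)) • innerSL ℝ (x i)) θ0 := by
      have := (h0.const_mul (y i)).neg
      exact this.congr_fderiv (by rw [neg_smul])
    have h2 := h1.exp
    have h3 := h2.const_mul (w i)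
    exact h3.congr_fderiv (by simp only [smul_smul])
  have hsum := HasFDerivAt.fun_sum (fun i (_ : i ∈ Finset.univ) => hterm i)
  have hmul := hsum.const_mul (1 / (n : ℝ))
  refine hmul.congr_fderiv ?_
  ext u
  simp only [ContinuousLinearMap.smul_apply, ContinuousLinearMap.coe_sum',
    Finset.sum_apply, innerSL_apply_apply, smul_eq_mul,
    InnerProductSpace.toDual_apply_apply, sum_inner, real_inner_smul_left,
    Finset.mul_sum]
  apply Finset.sum_congr rfl
  intro i _
  ring

lemma one_step {n d : ℕ} (hn : 0 < n)
    (x : Fin n → EuclideanSpace ℝ (Fin d)) (hx : ∀ i, ‖x i‖ ≤ 1)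
    (y : Fin n → ℝ) (hy : ∀ i, y i = 1 ∨ y i = -1)
    (w : Fin n → ℝ) (hw : ∀ i, 0 < w i)
    (L : EuclideanSpace ℝ (Fin d) → ℝ)
    (hL : ∀ θ, L θ = (1 / (n : ℝ)) * ∑ i, w i * Real.exp (-(y i * ⟪θ, x i⟫)))
    (θ0 : EuclideanSpace ℝ (Fin d)) (η0 : ℝ) (hη0 : 0 < η0) :
    L (θ0 - η0 • gradient L θ0) ≤ L θ0 *
      Real.exp (-(η0 * L θ0 * (1 - η0 * L θ0 / 2) * (‖gradient L θ0‖ / L θ0) ^ 2)) := by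
  have hn' : (n : ℝ) ≠ 0 := Nat.cast_ne_zero.mpr hn.ne'
  have hnpos : (0 : ℝ) < n := Nat.cast_pos.mpr hn
  have hne : (Finset.univ : Finset (Fin n)).Nonempty := by
    have : Nonempty (Fin n) := Fin.pos_iff_nonempty.mp hn
    exact Finset.univ_nonempty
  set e : Fin n → ℝ := fun i => Real.exp (-(y i * ⟪θ0, x i⟫)) with he
  set l : Fin n → ℝ := fun i => w i * e i with hldef
  have hlpos : ∀ i, 0 < l i := fun i => mul_pos (hw i) (Real.exp_pos _)
  have hy1 : ∀ i, |y i| = 1 := by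
    intro i; rcases hy i with h | h <;> rw [h] <;> norm_num
  have hLpos : ∀ θ, 0 < L θ := by
    intro θ
    rw [hL θ]
    exact mul_pos (by positivity)
      (Finset.sum_pos (fun i _ => mul_pos (hw i) (Real.exp_pos _)) hne)
  have hLfun : L = fun θ => (1 / (n : ℝ)) * ∑ i, w i * Real.exp (-(y i * ⟪θ, x i⟫)) :=
    funext hL
  set g := gradient L θ0 with hgdef
  have hg : g = ∑ i, (-((1 / (n : ℝ)) * w i * y i * e i)) • x i := by
    have := (grad_formula x y w θ0).gradient
    rw [← hLfun] at this
    exact this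
  -- norm of gradient bounded by L θ0
  have hgnorm : ‖g‖ ≤ L θ0 := by
    rw [hg]
    calc ‖∑ i, (-((1 / (n : ℝ)) * w i * y i * e i)) • x i‖
        ≤ ∑ i, ‖(-((1 / (n : ℝ)) * w i * y i * e i)) • x i‖ := norm_sum_le _ _
      _ ≤ ∑ i, (1 / (n : ℝ)) * l i := by
          apply Finset.sum_le_sum
          intro i _
          rw [norm_smul]
          have habs : ‖-((1 / (n : ℝ)) * w i * y i * e i)‖ = (1 / (n : ℝ)) * l i := by
            rw [Real.norm_eq_abs, abs_neg, abs_mul, abs_mul, abs_mul, hy1 i,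
              abs_of_nonneg (by positivity : (0:ℝ) ≤ 1 / (n:ℝ)),
              abs_of_nonneg (hw i).le, abs_of_nonneg (Real.exp_pos _).le]
            simp only [hldef]; ring
          rw [habs]
          have := hx i
          nlinarith [mul_pos (by positivity : (0:ℝ) < 1 / (n:ℝ)) (hlpos i), norm_nonneg (x i)]
      _ = L θ0 := by
          rw [hL θ0, Finset.mul_sum]
  -- key gradient identity
  have hsum_eq : ∑ i, (l i * y i) • x i = (-(n : ℝ)) • g := by
    rw [hg, Finset.smul_sum]
    apply Finset.sum_congr rfl
    intro i _
    rw [smul_smul]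
    congr 1
    field_simp [hldef]
    ring
  have key : ∑ i, l i * (y i * ⟪g, x i⟫) = -(n : ℝ) * ‖g‖ ^ 2 := by
    have h1 : ∑ i, l i * (y i * ⟪g, x i⟫) = ⟪g, ∑ i, (l i * y i) • x i⟫ := by
      rw [inner_sum]
      apply Finset.sum_congr rfl
      intro i _
      rw [real_inner_smul_right]
      ring
    rw [h1, hsum_eq, real_inner_smul_right, real_inner_self_eq_norm_sq]
    try ring
  -- the z values
  set z : Fin n → ℝ := fun i => η0 * (y i * ⟪g, x i⟫) with hzdef
  have hzb : ∀ i, |z i| ≤ η0 * ‖g‖ := by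
    intro i
    rw [hzdef]
    simp only [abs_mul, abs_of_pos hη0, hy1 i, one_mul]
    have h1 := abs_real_inner_le_norm g (x i)
    have h2 : ‖g‖ * ‖x i‖ ≤ ‖g‖ * 1 := mul_le_mul_of_nonneg_left (hx i) (norm_nonneg g)
    have h3 := mul_le_mul_of_nonneg_left (h1.trans h2) hη0.le
    linarith
  -- value at new point
  have hnew : L (θ0 - η0 • g) = (1 / (n : ℝ)) * ∑ i, l i * Real.exp (z i) := by
    rw [hL]
    congr 1
    apply Finset.sum_congr rfl
    intro i _
    rw [inner_sub_left, real_inner_smul_left]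
    rw [show -(y i * (⟪θ0, x i⟫ - η0 * ⟪g, x i⟫))
        = -(y i * ⟪θ0, x i⟫) + η0 * (y i * ⟪g, x i⟫) by ring, Real.exp_add]
    simp only [hldef, hzdef, he]
    ring
  have hS : ∑ i, l i = (n : ℝ) * L θ0 := by
    rw [hL θ0]
    rw [show ((n:ℝ) * (1 / (n:ℝ) * ∑ i, w i * Real.exp (-(y i * ⟪θ0, x i⟫))))
      = ∑ i, w i * Real.exp (-(y i * ⟪θ0, x i⟫)) by field_simp]
  have hsumlz : ∑ i, l i * z i = η0 * (-(n : ℝ) * ‖g‖ ^ 2) := by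
    rw [← key, Finset.mul_sum]
    apply Finset.sum_congr rfl
    intro i _
    rw [hzdef]
    ring
  have hhoeff := hoeff_fin hn l z hlpos (η0 * ‖g‖) hzb
  have hexp_eq : (∑ i, l i * z i) / (∑ i, l i) + (η0 * ‖g‖) ^ 2 / 2
      = -(η0 * L θ0 * (1 - η0 * L θ0 / 2) * (‖g‖ / L θ0) ^ 2) := by
    rw [hsumlz, hS]
    have hL0 : L θ0 ≠ 0 := (hLpos θ0).ne'
    field_simp
    ring
  calc L (θ0 - η0 • g) = (1 / (n : ℝ)) * ∑ i, l i * Real.exp (z i) := hnew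
    _ ≤ (1 / (n : ℝ)) * ((∑ i, l i) *
        Real.exp ((∑ i, l i * z i) / (∑ i, l i) + (η0 * ‖g‖) ^ 2 / 2)) := by
        apply mul_le_mul_of_nonneg_left hhoeff (by positivity)
    _ = L θ0 * Real.exp (-(η0 * L θ0 * (1 - η0 * L θ0 / 2) * (‖g‖ / L θ0) ^ 2)) := by
        rw [hexp_eq, hS]
        field_simp


/-- Multi-step exponential decrease of the weighted exponential risk along gradient
descent with stepsizes satisfying `η_j L(θ^(j);w) ≤ 1`. -/
theorem stmt_6 (n d : ℕ) (hn : 0 < n)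
    (x : Fin n → EuclideanSpace ℝ (Fin d)) (hx : ∀ i, ‖x i‖ ≤ 1)
    (y : Fin n → ℝ) (hy : ∀ i, y i = 1 ∨ y i = -1)
    (w : Fin n → ℝ) (hw : ∀ i, 0 < w i)
    (L : EuclideanSpace ℝ (Fin d) → ℝ)
    (hL : ∀ θ, L θ = (1 / (n : ℝ)) * ∑ i, w i * Real.exp (-(y i * ⟪θ, x i⟫)))
    (η : ℕ → ℝ) (hη : ∀ j, 0 < η j)
    (θ : ℕ → EuclideanSpace ℝ (Fin d))
    (hGD : ∀ j, θ (j + 1) = θ j - η j • gradient L (θ j))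
    (hηL : ∀ j, η j * L (θ j) ≤ 1) :
    ∀ t : ℕ, 1 ≤ t →
      L (θ t) ≤ L (θ 0) *
        Real.exp (-(∑ j ∈ Finset.range t,
          η j * L (θ j) * (1 - η j * L (θ j) / 2) * (‖gradient L (θ j)‖ / L (θ j)) ^ 2)) := by
  have main : ∀ t : ℕ, L (θ t) ≤ L (θ 0) *
      Real.exp (-(∑ j ∈ Finset.range t,
        η j * L (θ j) * (1 - η j * L (θ j) / 2) * (‖gradient L (θ j)‖ / L (θ j)) ^ 2)) := by
    intro t
    induction t with
    | zero => simp
    | succ t ih =>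
      have hstep := one_step hn x hx y hy w hw L hL (θ t) (η t) (hη t)
      rw [← hGD t] at hstep
      calc L (θ (t + 1))
          ≤ L (θ t) * Real.exp (-(η t * L (θ t) * (1 - η t * L (θ t) / 2) *
              (‖gradient L (θ t)‖ / L (θ t)) ^ 2)) := hstep
        _ ≤ (L (θ 0) * Real.exp (-(∑ j ∈ Finset.range t,
              η j * L (θ j) * (1 - η j * L (θ j) / 2) * (‖gradient L (θ j)‖ / L (θ j)) ^ 2))) *
            Real.exp (-(η t * L (θ t) * (1 - η t * L (θ t) / 2) *
              (‖gradient L (θ t)‖ / L (θ t)) ^ 2)) :=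
            mul_le_mul_of_nonneg_right ih (Real.exp_pos _).le
        _ = L (θ 0) * Real.exp (-(∑ j ∈ Finset.range (t + 1),
              η j * L (θ j) * (1 - η j * L (θ j) / 2) * (‖gradient L (θ j)‖ / L (θ j)) ^ 2)) := by
            rw [Finset.sum_range_succ, neg_add, Real.exp_add]
            ring
  exact fun t _ => main t
end

section
/- Suppose the data is linearly separable with maximum ℓ₂ margin γ* > 0 and the weights satisfy w_i > 0. Then for every θ ∈ ℝ^d, the weighted exponential risk satisfies the gradient lower bound ‖∇_θ L(θ;w)‖₂ ≥ γ* · L(θ;w). -/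
open scoped RealInnerProductSpace BigOperators

/-- Gradient lower bound for the weighted exponential risk on linearly separable data:
`‖∇L(θ;w)‖ ≥ γ* L(θ;w)` where `γ*` is the maximum ℓ₂ margin. -/
theorem stmt_7 (n d : ℕ) (hn : 0 < n)
    (x : Fin n → EuclideanSpace ℝ (Fin d)) (y : Fin n → ℝ)
    (hy : ∀ i, y i = 1 ∨ y i = -1)
    (w : Fin n → ℝ) (hw : ∀ i, 0 < w i)
    (L : EuclideanSpace ℝ (Fin d) → ℝ)
    (hL : ∀ θ, L θ = (1 / (n : ℝ)) * ∑ i, w i * Real.exp (-(y i * ⟪θ, x i⟫)))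
    (γ : ℝ) (hγ : 0 < γ)
    (θs : EuclideanSpace ℝ (Fin d)) (hθsnorm : ‖θs‖ = 1)
    (hmargin : ∀ i, γ ≤ y i * ⟪θs, x i⟫)
    (hmax : ∀ u : EuclideanSpace ℝ (Fin d), ‖u‖ ≤ 1 → ∃ i, y i * ⟪u, x i⟫ ≤ γ) :
    ∀ θ : EuclideanSpace ℝ (Fin d), γ * L θ ≤ ‖gradient L θ‖ := by
  intro θ
  -- the candidate Fréchet derivative
  set D : EuclideanSpace ℝ (Fin d) →L[ℝ] ℝ :=
    (1 / (n : ℝ)) • ∑ i, (w i * Real.exp (-(y i * ⟪θ, x i⟫))) • innerSL ℝ ((-(y i)) • x i)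
    with hD
  have hderiv : HasFDerivAt L D θ := by
    have h1 : ∀ i : Fin n, HasFDerivAt (fun θ' : EuclideanSpace ℝ (Fin d) => -(y i * ⟪θ', x i⟫))
        (innerSL ℝ ((-(y i)) • x i)) θ := by
      intro i
      have : (fun θ' : EuclideanSpace ℝ (Fin d) => -(y i * ⟪θ', x i⟫))
          = fun θ' => innerSL ℝ ((-(y i)) • x i) θ' := by
        funext θ'
        simp only [innerSL_apply_apply, real_inner_smul_left]
        rw [real_inner_comm]
        ring
      rw [this]
      exact (innerSL ℝ ((-(y i)) • x i)).hasFDerivAt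
    have h2 : HasFDerivAt (fun θ' : EuclideanSpace ℝ (Fin d) =>
        ∑ i, w i * Real.exp (-(y i * ⟪θ', x i⟫)))
        (∑ i, (w i * Real.exp (-(y i * ⟪θ, x i⟫))) • innerSL ℝ ((-(y i)) • x i)) θ := by
      apply HasFDerivAt.fun_sum
      intro i _
      have := ((h1 i).exp).const_mul (w i)
      rw [smul_smul] at this
      convert this using 2
    have h3 := h2.const_smul (1 / (n : ℝ))
    have heq : (fun θ' : EuclideanSpace ℝ (Fin d) =>
        (1 / (n : ℝ)) • ∑ i, w i * Real.exp (-(y i * ⟪θ', x i⟫))) = L := by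
      funext θ'; rw [hL θ']; simp [smul_eq_mul]
    rw [← heq]
    exact h3
  have hgrad : gradient L θ = (InnerProductSpace.toDual ℝ (EuclideanSpace ℝ (Fin d))).symm D := by
    have : HasGradientAt L ((InnerProductSpace.toDual ℝ (EuclideanSpace ℝ (Fin d))).symm D) θ := by
      rw [hasGradientAt_iff_hasFDerivAt]
      simpa using hderiv
    exact this.gradient
  have hip : ⟪gradient L θ, θs⟫ = D θs := by
    rw [hgrad]
    exact InnerProductSpace.toDual_symm_apply
  -- compute D θs
  have hDθs : -(D θs) = (1 / (n : ℝ)) * ∑ i, w i * Real.exp (-(y i * ⟪θ, x i⟫)) * (y i * ⟪θs, x i⟫) := by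
    rw [hD]
    simp only [ContinuousLinearMap.smul_apply, ContinuousLinearMap.sum_apply,
      innerSL_apply_apply, real_inner_smul_left, smul_eq_mul]
    rw [Finset.mul_sum, Finset.mul_sum, ← Finset.sum_neg_distrib]
    apply Finset.sum_congr rfl
    intro i _
    rw [real_inner_comm θs (x i)]
    ring
  -- lower bound: γ * L θ ≤ -(D θs)
  have hlow : γ * L θ ≤ -(D θs) := by
    rw [hDθs, hL θ, Finset.mul_sum, Finset.mul_sum, Finset.mul_sum]
    apply Finset.sum_le_sum
    intro i _
    have hn' : (0:ℝ) < (n:ℝ) := by exact_mod_cast hn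
    have hwi := hw i
    have hc : (0:ℝ) ≤ (1 / (n:ℝ)) * (w i * Real.exp (-(y i * ⟪θ, x i⟫))) := by positivity
    nlinarith [mul_le_mul_of_nonneg_left (hmargin i) hc]
  -- upper bound by Cauchy-Schwarz
  have hcs : -(D θs) ≤ ‖gradient L θ‖ := by
    rw [← hip]
    calc -⟪gradient L θ, θs⟫ ≤ |⟪gradient L θ, θs⟫| := neg_le_abs _
      _ ≤ ‖gradient L θ‖ * ‖θs‖ := abs_real_inner_le_norm _ _
      _ = ‖gradient L θ‖ := by rw [hθsnorm, mul_one]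
  linarith
end

section
/- Suppose the data is linearly separable with maximum margin γ* > 0, let θ* be the unit max-margin direction, and let p* ∈ Δ_n be a dual optimum, i.e. ∑_i p*_i y_i x_i = γ* θ*. Then for every θ ∈ ℝ^d with θ ≠ 0 and every weight vector w with strictly positive entries, (1/2)‖θ/‖θ‖₂ − θ*‖₂² ≤ 1 + (log L(θ;w) + log n + D_KL(p*‖w)) / (γ* ‖θ‖₂). -/
open scoped RealInnerProductSpace BigOperators

/-- Fenchel–Young bound on the angular distance of any nonzero `θ` to the max-margin
direction `θ*` in terms of the weighted exponential risk and `D_KL(p*‖w)`. -/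
theorem stmt_8 (n d : ℕ) (hn : 1 ≤ n)
    (x : Fin n → EuclideanSpace ℝ (Fin d)) (y : Fin n → ℝ)
    (hy : ∀ i, y i = 1 ∨ y i = -1)
    (w : Fin n → ℝ) (hw : ∀ i, 0 < w i)
    (L : EuclideanSpace ℝ (Fin d) → ℝ)
    (hL : ∀ θ, L θ = (1 / (n : ℝ)) * ∑ i, w i * Real.exp (-(y i * ⟪θ, x i⟫)))
    (γ : ℝ) (hγ : 0 < γ)
    (θs : EuclideanSpace ℝ (Fin d)) (hθsnorm : ‖θs‖ = 1)
    (hmargin : ∀ i, γ ≤ y i * ⟪θs, x i⟫)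
    (hmax : ∀ u : EuclideanSpace ℝ (Fin d), ‖u‖ ≤ 1 → ∃ i, y i * ⟪u, x i⟫ ≤ γ)
    (ps : Fin n → ℝ) (hps : ∀ i, 0 ≤ ps i) (hps1 : ∑ i, ps i = 1)
    (hdual : ∑ i, (ps i * y i) • x i = γ • θs)
    (θ : EuclideanSpace ℝ (Fin d)) (hθ : θ ≠ 0) :
    (1 / 2) * ‖‖θ‖⁻¹ • θ - θs‖ ^ 2 ≤
      1 + (Real.log (L θ) + Real.log n + ∑ i, ps i * Real.log (ps i / w i)) / (γ * ‖θ‖) := by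
  have hnpos : (0:ℝ) < n := by exact_mod_cast hn
  haveI : Nonempty (Fin n) := Fin.pos_iff_nonempty.mp hn
  set a : Fin n → ℝ := fun i => -(y i * ⟪θ, x i⟫) with ha
  set S : ℝ := ∑ i, w i * Real.exp (a i) with hS
  have hSpos : 0 < S :=
    Finset.sum_pos (fun i _ => mul_pos (hw i) (Real.exp_pos _)) Finset.univ_nonempty
  -- termwise Fenchel-Young / Gibbs
  have hterm : ∀ i, ps i * (a i - Real.log (ps i / w i) - Real.log S)
      ≤ w i * Real.exp (a i) / S - ps i := by
    intro i
    rcases eq_or_lt_of_le (hps i) with h0 | hpi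
    · rw [← h0]
      simp only [zero_mul, zero_sub, neg_zero, sub_zero]
      exact div_nonneg (mul_pos (hw i) (Real.exp_pos _)).le hSpos.le
    · have hx : 0 < w i * Real.exp (a i) / (ps i * S) :=
        div_pos (mul_pos (hw i) (Real.exp_pos _)) (mul_pos hpi hSpos)
      have hlog := Real.log_le_sub_one_of_pos hx
      have heq : Real.log (w i * Real.exp (a i) / (ps i * S))
          = a i - Real.log (ps i / w i) - Real.log S := by
        rw [Real.log_div (mul_pos (hw i) (Real.exp_pos _)).ne' (mul_pos hpi hSpos).ne',
            Real.log_mul (hw i).ne' (Real.exp_pos _).ne', Real.log_exp,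
            Real.log_mul hpi.ne' hSpos.ne', Real.log_div hpi.ne' (hw i).ne']
        ring
      rw [heq] at hlog
      have h2 := mul_le_mul_of_nonneg_left hlog hpi.le
      calc ps i * (a i - Real.log (ps i / w i) - Real.log S)
          ≤ ps i * (w i * Real.exp (a i) / (ps i * S) - 1) := h2
        _ = w i * Real.exp (a i) / S - ps i := by
            field_simp
  have hsum : ∑ i, ps i * (a i - Real.log (ps i / w i) - Real.log S)
      ≤ ∑ i, (w i * Real.exp (a i) / S - ps i) :=
    Finset.sum_le_sum (fun i _ => hterm i)
  have hRHS : ∑ i, (w i * Real.exp (a i) / S - ps i) = 0 := by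
    rw [Finset.sum_sub_distrib, ← Finset.sum_div, ← hS, hps1, div_self hSpos.ne']
    ring
  have hLHS : ∑ i, ps i * (a i - Real.log (ps i / w i) - Real.log S)
      = (∑ i, ps i * a i) - (∑ i, ps i * Real.log (ps i / w i)) - Real.log S := by
    simp only [mul_sub]
    rw [Finset.sum_sub_distrib, Finset.sum_sub_distrib, ← Finset.sum_mul, hps1, one_mul]
  have key : (∑ i, ps i * a i) ≤ (∑ i, ps i * Real.log (ps i / w i)) + Real.log S := by
    rw [hLHS, hRHS] at hsum; linarith
  -- compute ∑ ps i * a i = -(γ * ⟪θ, θs⟫)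
  have hinner : (∑ i, ps i * a i) = -(γ * ⟪θ, θs⟫) := by
    have h1 : ⟪θ, ∑ i, (ps i * y i) • x i⟫ = ∑ i, (ps i * y i) * ⟪θ, x i⟫ := by
      rw [inner_sum]
      exact Finset.sum_congr rfl fun i _ => real_inner_smul_right _ _ _
    rw [hdual, real_inner_smul_right] at h1
    calc (∑ i, ps i * a i) = -∑ i, (ps i * y i) * ⟪θ, x i⟫ := by
          rw [← Finset.sum_neg_distrib]
          exact Finset.sum_congr rfl fun i _ => by simp only [ha]; ring
      _ = -(γ * ⟪θ, θs⟫) := by rw [← h1]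
  -- log S = log (L θ) + log n
  have hLθ : L θ = S / n := by rw [hL]; rw [hS]; ring
  have hLpos : 0 < L θ := by rw [hLθ]; exact div_pos hSpos hnpos
  have hlogS : Real.log S = Real.log (L θ) + Real.log n := by
    rw [hLθ, Real.log_div hSpos.ne' hnpos.ne']
    ring
  have key2 : -(γ * ⟪θ, θs⟫)
      ≤ Real.log (L θ) + Real.log n + ∑ i, ps i * Real.log (ps i / w i) := by
    rw [hinner, hlogS] at key
    linarith
  -- final arithmetic
  have hnθ : (0:ℝ) < ‖θ‖ := norm_pos_iff.mpr hθ
  have hpos : 0 < γ * ‖θ‖ := mul_pos hγ hnθ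
  have hu : ‖‖θ‖⁻¹ • θ‖ = 1 := by
    rw [norm_smul, norm_inv, norm_norm, inv_mul_cancel₀ hnθ.ne']
  have hexp : (1/2 : ℝ) * ‖‖θ‖⁻¹ • θ - θs‖ ^ 2 = 1 - ‖θ‖⁻¹ * ⟪θ, θs⟫ := by
    rw [norm_sub_sq_real, hu, hθsnorm, real_inner_smul_left]
    ring
  have hdiv : -(‖θ‖⁻¹ * ⟪θ, θs⟫)
      ≤ (Real.log (L θ) + Real.log n + ∑ i, ps i * Real.log (ps i / w i)) / (γ * ‖θ‖) := by
    rw [le_div_iff₀ hpos]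
    calc -(‖θ‖⁻¹ * ⟪θ, θs⟫) * (γ * ‖θ‖) = -(γ * ⟪θ, θs⟫) := by
          field_simp
      _ ≤ _ := key2
  rw [hexp]
  linarith
end

section
/- Call the data totally non-separable if there is no u ∈ ℝ^d with y_i⟨u,x_i⟩ ≥ 0 for all i and y_j⟨u,x_j⟩ > 0 for some j. If the data is totally non-separable and the weights satisfy w_i > 0, then the weighted exponential risk L(·;w) restricted to V = span{x_1,…,x_n} attains its infimum, and the minimizer θ̃(w) ∈ V is unique. -/
open scoped RealInnerProductSpace BigOperators

lemma exp_mid_le (a b : ℝ) :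
    Real.exp ((a + b) / 2) ≤ (Real.exp a + Real.exp b) / 2 := by
  have h := convexOn_exp.2 (Set.mem_univ a) (Set.mem_univ b)
    (by norm_num : (0:ℝ) ≤ 1/2) (by norm_num : (0:ℝ) ≤ 1/2) (by norm_num)
  have h1 : (1/2 : ℝ) • a + (1/2 : ℝ) • b = (a + b) / 2 := by
    simp [smul_eq_mul]; ring
  rw [h1] at h
  calc Real.exp ((a + b) / 2) ≤ (1/2:ℝ) • Real.exp a + (1/2:ℝ) • Real.exp b := h
    _ = (Real.exp a + Real.exp b) / 2 := by rw [smul_eq_mul, smul_eq_mul]; ring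

lemma exp_mid_lt {a b : ℝ} (hab : a ≠ b) :
    Real.exp ((a + b) / 2) < (Real.exp a + Real.exp b) / 2 := by
  have h := strictConvexOn_exp.2 (Set.mem_univ a) (Set.mem_univ b) hab
    (by norm_num : (0:ℝ) < 1/2) (by norm_num : (0:ℝ) < 1/2) (by norm_num)
  have h1 : (1/2 : ℝ) • a + (1/2 : ℝ) • b = (a + b) / 2 := by
    simp [smul_eq_mul]; ring
  rw [h1] at h
  calc Real.exp ((a + b) / 2) < (1/2:ℝ) • Real.exp a + (1/2:ℝ) • Real.exp b := h
    _ = (Real.exp a + Real.exp b) / 2 := by simp [smul_eq_mul]; ring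

/-- If the data is totally non-separable, the weighted exponential risk restricted to
`V = span{x₁,…,xₙ}` attains its infimum at a unique minimizer. -/
theorem stmt_12 (n d : ℕ)
    (x : Fin n → EuclideanSpace ℝ (Fin d)) (y : Fin n → ℝ)
    (hy : ∀ i, y i = 1 ∨ y i = -1)
    (w : Fin n → ℝ) (hw : ∀ i, 0 < w i)
    (L : EuclideanSpace ℝ (Fin d) → ℝ)
    (hL : ∀ θ, L θ = (1 / (n : ℝ)) * ∑ i, w i * Real.exp (-(y i * ⟪θ, x i⟫)))
    (hnonsep : ¬ ∃ u : EuclideanSpace ℝ (Fin d),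
      (∀ i, 0 ≤ y i * ⟪u, x i⟫) ∧ (∃ j, 0 < y j * ⟪u, x j⟫)) :
    ∃ θt : EuclideanSpace ℝ (Fin d),
      θt ∈ Submodule.span ℝ (Set.range x) ∧
      (∀ θ ∈ Submodule.span ℝ (Set.range x), L θt ≤ L θ) ∧
      (∀ θ' ∈ Submodule.span ℝ (Set.range x),
        (∀ θ ∈ Submodule.span ℝ (Set.range x), L θ' ≤ L θ) → θ' = θt) := by
  classical
  set V : Submodule ℝ (EuclideanSpace ℝ (Fin d)) := Submodule.span ℝ (Set.range x) with hVdef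
  -- orthogonality fact: an element of V orthogonal to all x i is zero
  have key0 : ∀ u ∈ V, (∀ i, ⟪u, x i⟫ = 0) → u = 0 := by
    intro u hu h0
    have hle : V ≤ (ℝ ∙ u)ᗮ := by
      rw [hVdef, Submodule.span_le]
      rintro v ⟨i, rfl⟩
      rw [SetLike.mem_coe, Submodule.mem_orthogonal]
      rintro z hz
      rcases Submodule.mem_span_singleton.mp hz with ⟨c, rfl⟩
      rw [real_inner_smul_left, h0 i, mul_zero]
    have h1 := hle hu
    rw [Submodule.mem_orthogonal] at h1
    have h2 := h1 u (Submodule.mem_span_singleton_self u)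
    exact inner_self_eq_zero.mp h2
  by_cases hbot : V = ⊥
  · refine ⟨0, V.zero_mem, ?_, ?_⟩
    · intro θ hθ
      rw [hbot, Submodule.mem_bot] at hθ
      subst hθ; exact le_refl _
    · intro θ' hθ' _
      rw [hbot, Submodule.mem_bot] at hθ'
      exact hθ'
  -- now V ≠ ⊥, so n > 0
  have hn : 0 < n := by
    rcases Nat.eq_zero_or_pos n with h0 | h
    · exfalso; apply hbot
      subst h0
      rw [hVdef]
      have : Set.range x = ∅ := by
        simp [Set.range_eq_empty]
      rw [this, Submodule.span_empty]
    · exact h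
  haveI : Nonempty (Fin n) := ⟨⟨0, hn⟩⟩
  have hnR : (0:ℝ) < (n:ℝ) := by exact_mod_cast hn
  -- nonseparability: every nonzero u ∈ V has a strictly negative margin
  have keyneg : ∀ u ∈ V, u ≠ 0 → ∃ i, y i * ⟪u, x i⟫ < 0 := by
    intro u hu hune
    by_contra hc
    push_neg at hc
    apply hnonsep
    refine ⟨u, fun i => hc i, ?_⟩
    have hex : ∃ i, ⟪u, x i⟫ ≠ 0 := by
      by_contra h'; push_neg at h'
      exact hune (key0 u hu h')
    rcases hex with ⟨j, hj⟩
    have hyj : y j ≠ 0 := by rcases hy j with h | h <;> simp [h]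
    exact ⟨j, lt_of_le_of_ne (hc j) (mul_ne_zero hyj hj).symm⟩
  -- compact sphere argument
  set S : Set (EuclideanSpace ℝ (Fin d)) := Metric.sphere (0:EuclideanSpace ℝ (Fin d)) 1 ∩ (V : Set (EuclideanSpace ℝ (Fin d))) with hSdef
  have hScomp : IsCompact S :=
    (isCompact_sphere (0:EuclideanSpace ℝ (Fin d)) 1).inter_right V.closed_of_finiteDimensional
  have hSne : S.Nonempty := by
    obtain ⟨v, hvV, hvne⟩ := Submodule.exists_mem_ne_zero_of_ne_bot hbot
    have hv : ‖v‖ ≠ 0 := norm_ne_zero_iff.mpr hvne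
    refine ⟨‖v‖⁻¹ • v, ?_, V.smul_mem _ hvV⟩
    rw [mem_sphere_zero_iff_norm, norm_smul, norm_inv, norm_norm,
      inv_mul_cancel₀ hv]
  set g : EuclideanSpace ℝ (Fin d) → ℝ := fun u => Finset.univ.sup' Finset.univ_nonempty
    (fun i => -(y i * ⟪u, x i⟫)) with hgdef
  have hgcont : Continuous g := by
    apply Continuous.finset_sup'_apply Finset.univ_nonempty
    intro i _
    exact (continuous_const.mul (continuous_id.inner continuous_const)).neg
  obtain ⟨u₀, hu₀S, hu₀min'⟩ := hScomp.exists_isMinOn hSne hgcont.continuousOn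
  have hu₀min : ∀ u ∈ S, g u₀ ≤ g u := fun u hu => hu₀min' hu
  set c : ℝ := g u₀ with hcdef
  have hc : 0 < c := by
    obtain ⟨hu₀s, hu₀V⟩ := hu₀S
    have hne : u₀ ≠ 0 := by
      intro h
      rw [mem_sphere_zero_iff_norm, h, norm_zero] at hu₀s
      norm_num at hu₀s
    obtain ⟨i, hi⟩ := keyneg u₀ hu₀V hne
    calc (0:ℝ) < -(y i * ⟪u₀, x i⟫) := by linarith
      _ ≤ c := Finset.le_sup' (fun i => -(y i * ⟪u₀, x i⟫)) (Finset.mem_univ i)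
  set wmin : ℝ := Finset.univ.inf' Finset.univ_nonempty w with hwmdef
  have hwmin : 0 < wmin := by
    rw [hwmdef, Finset.lt_inf'_iff]
    exact fun i _ => hw i
  -- coercivity lower bound
  have lb : ∀ θ : EuclideanSpace ℝ (Fin d), θ ∈ V → 1 ≤ ‖θ‖ →
      1 / (n:ℝ) * (wmin * Real.exp (c * ‖θ‖)) ≤ L θ := by
    intro θ hθ hθ1
    have hnorm : (0:ℝ) < ‖θ‖ := lt_of_lt_of_le one_pos hθ1
    set u : EuclideanSpace ℝ (Fin d) := ‖θ‖⁻¹ • θ with hudef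
    have huS : u ∈ S := by
      constructor
      · rw [mem_sphere_zero_iff_norm, hudef, norm_smul, norm_inv, norm_norm,
          inv_mul_cancel₀ hnorm.ne']
      · exact V.smul_mem _ hθ
    have hcu : c ≤ g u := hu₀min u huS
    obtain ⟨i, _, hi⟩ := Finset.exists_mem_eq_sup' Finset.univ_nonempty
      (fun i => -(y i * ⟪u, x i⟫))
    have h1 : c ≤ -(y i * ⟪u, x i⟫) := hcu.trans_eq hi
    have hinner : ⟪u, x i⟫ = ‖θ‖⁻¹ * ⟪θ, x i⟫ := real_inner_smul_left _ _ _
    have h2 : c * ‖θ‖ ≤ -(y i * ⟪θ, x i⟫) := by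
      have h3 := mul_le_mul_of_nonneg_right h1 hnorm.le
      rw [hinner] at h3
      have h4 : -(y i * (‖θ‖⁻¹ * ⟪θ, x i⟫)) * ‖θ‖ = -(y i * ⟪θ, x i⟫) := by
        field_simp
      rw [h4] at h3
      exact h3
    have hsum : w i * Real.exp (-(y i * ⟪θ, x i⟫)) ≤
        ∑ j, w j * Real.exp (-(y j * ⟪θ, x j⟫)) :=
      Finset.single_le_sum (f := fun j => w j * Real.exp (-(y j * ⟪θ, x j⟫)))
        (fun j _ => mul_nonneg (hw j).le (Real.exp_pos _).le) (Finset.mem_univ i)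
    have hterm : wmin * Real.exp (c * ‖θ‖) ≤ w i * Real.exp (-(y i * ⟪θ, x i⟫)) :=
      mul_le_mul (Finset.inf'_le _ (Finset.mem_univ i))
        (Real.exp_le_exp.mpr h2) (Real.exp_pos _).le (hw i).le
    rw [hL]
    exact mul_le_mul_of_nonneg_left (hterm.trans hsum) (by positivity)
  -- existence of minimizer on V via coercivity
  let f : ↥V → ℝ := fun θ => L ↑θ
  have hfeq : f = fun θ : ↥V => (1 / (n:ℝ)) * ∑ i, w i * Real.exp (-(y i * ⟪(θ:EuclideanSpace ℝ (Fin d)), x i⟫)) :=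
    funext fun θ => hL _
  have hfcont : Continuous f := by
    rw [hfeq]
    refine continuous_const.mul (continuous_finset_sum _ fun i _ => ?_)
    exact continuous_const.mul
      (Real.continuous_exp.comp
        ((continuous_const.mul (continuous_subtype_val.inner continuous_const)).neg))
  have hnorm_tendsto : Filter.Tendsto (fun θ : ↥V => ‖θ‖)
      (Filter.cocompact ↥V) Filter.atTop := tendsto_norm_cocompact_atTop
  have hcoer : Filter.Tendsto f (Filter.cocompact ↥V) Filter.atTop := by
    have h2 : Filter.Tendsto (fun θ : ↥V => 1 / (n:ℝ) * (wmin * Real.exp (c * ‖θ‖)))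
        (Filter.cocompact ↥V) Filter.atTop := by
      apply Filter.Tendsto.const_mul_atTop (by positivity : (0:ℝ) < 1 / (n:ℝ))
      apply Filter.Tendsto.const_mul_atTop hwmin
      exact Real.tendsto_exp_atTop.comp (hnorm_tendsto.const_mul_atTop hc)
    apply Filter.tendsto_atTop_mono' _ _ h2
    filter_upwards [hnorm_tendsto.eventually_ge_atTop 1] with θ hθ
    exact lb θ θ.2 hθ
  obtain ⟨θm, hθm⟩ := hfcont.exists_forall_le hcoer
  refine ⟨θm, θm.2, fun θ hθ => hθm ⟨θ, hθ⟩, ?_⟩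
  -- uniqueness
  intro θ' hθ' hmin'
  by_contra hne
  set m : EuclideanSpace ℝ (Fin d) := (2:ℝ)⁻¹ • (θ' + (θm:EuclideanSpace ℝ (Fin d))) with hmdef
  have hmV : m ∈ V := V.smul_mem _ (V.add_mem hθ' θm.2)
  have hex : ∃ i, ⟪θ' - (θm:EuclideanSpace ℝ (Fin d)), x i⟫ ≠ 0 := by
    by_contra h'; push_neg at h'
    exact hne (sub_eq_zero.mp (key0 _ (V.sub_mem hθ' θm.2) h'))
  obtain ⟨i₀, hi₀⟩ := hex
  have hyi₀ : y i₀ ≠ 0 := by rcases hy i₀ with h | h <;> simp [h]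
  have hL' : L θ' = L ↑θm := le_antisymm (hmin' _ θm.2) (hθm ⟨θ', hθ'⟩)
  have hmid : ∀ i, -(y i * ⟪m, x i⟫) =
      ((-(y i * ⟪θ', x i⟫)) + (-(y i * ⟪(θm:EuclideanSpace ℝ (Fin d)), x i⟫))) / 2 := by
    intro i
    rw [hmdef, real_inner_smul_left, inner_add_left]
    ring
  have hab : -(y i₀ * ⟪θ', x i₀⟫) ≠ -(y i₀ * ⟪(θm:EuclideanSpace ℝ (Fin d)), x i₀⟫) := by
    intro h
    apply hi₀
    have h' : y i₀ * ⟪θ', x i₀⟫ = y i₀ * ⟪(θm:EuclideanSpace ℝ (Fin d)), x i₀⟫ := by linarith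
    have h'' : ⟪θ', x i₀⟫ = ⟪(θm:EuclideanSpace ℝ (Fin d)), x i₀⟫ := mul_left_cancel₀ hyi₀ h'
    rw [inner_sub_left, h'', sub_self]
  have hstrict : ∑ i, w i * Real.exp (-(y i * ⟪m, x i⟫)) <
      ∑ i, w i * ((Real.exp (-(y i * ⟪θ', x i⟫)) + Real.exp (-(y i * ⟪(θm:EuclideanSpace ℝ (Fin d)), x i⟫))) / 2) := by
    apply Finset.sum_lt_sum
    · intro i _
      rw [hmid i]
      exact mul_le_mul_of_nonneg_left (exp_mid_le _ _) (hw i).le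
    · refine ⟨i₀, Finset.mem_univ i₀, ?_⟩
      rw [hmid i₀]
      exact mul_lt_mul_of_pos_left (exp_mid_lt hab) (hw i₀)
  have hsplit : ∑ i, w i * ((Real.exp (-(y i * ⟪θ', x i⟫)) + Real.exp (-(y i * ⟪(θm:EuclideanSpace ℝ (Fin d)), x i⟫))) / 2)
      = ((∑ i, w i * Real.exp (-(y i * ⟪θ', x i⟫))) +
         (∑ i, w i * Real.exp (-(y i * ⟪(θm:EuclideanSpace ℝ (Fin d)), x i⟫)))) / 2 := by
    rw [← Finset.sum_add_distrib, Finset.sum_div]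
    apply Finset.sum_congr rfl
    intro i _
    ring
  have hsums : ∑ i, w i * Real.exp (-(y i * ⟪θ', x i⟫)) =
      ∑ i, w i * Real.exp (-(y i * ⟪(θm:EuclideanSpace ℝ (Fin d)), x i⟫)) := by
    have := hL'
    rw [hL, hL] at this
    exact mul_left_cancel₀ (by positivity : (1 / (n:ℝ)) ≠ 0) this
  have hkey : L m < L ↑θm := by
    rw [hL m, hL ↑θm]
    apply mul_lt_mul_of_pos_left _ (by positivity : (0:ℝ) < 1 / (n:ℝ))
    calc ∑ i, w i * Real.exp (-(y i * ⟪m, x i⟫))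
        < ((∑ i, w i * Real.exp (-(y i * ⟪θ', x i⟫))) +
           (∑ i, w i * Real.exp (-(y i * ⟪(θm:EuclideanSpace ℝ (Fin d)), x i⟫)))) / 2 := by
          rw [← hsplit]; exact hstrict
      _ = ∑ i, w i * Real.exp (-(y i * ⟪(θm:EuclideanSpace ℝ (Fin d)), x i⟫)) := by rw [hsums]; ring
  exact absurd (hθm ⟨m, hmV⟩) (not_le.mpr hkey)
end

section
/- For any labeled dataset (x_1,y_1),…,(x_n,y_n) with x_i ∈ ℝ^d and y_i ∈ {−1,+1}, there exist a partition {1,…,n} = S ⊔ N (with S or N possibly empty) and a vector θ̄ ∈ ℝ^d such that: (i) y_i⟨θ̄,x_i⟩ > 0 for every i ∈ S; (ii) y_j⟨θ̄,x_j⟩ = 0 for every j ∈ N; and (iii) S is maximal in the sense that for every θ ∈ ℝ^d, if y_j⟨θ,x_j⟩ > 0 for some j ∈ N then y_k⟨θ,x_k⟩ < 0 for some k ∈ N. -/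
open scoped RealInnerProductSpace BigOperators

/-- Every labeled dataset admits a maximal separable partition: a set `S` of indices, a
vector `θ̄` strictly separating the samples in `S` while vanishing on its complement `N`,
such that no `θ` can be strictly correct on some sample of `N` without being strictly
incorrect on another sample of `N`. -/
theorem stmt_13 (n d : ℕ)
    (x : Fin n → EuclideanSpace ℝ (Fin d)) (y : Fin n → ℝ)
    (hy : ∀ i, y i = 1 ∨ y i = -1) :
    ∃ S : Finset (Fin n), ∃ θb : EuclideanSpace ℝ (Fin d),
      (∀ i ∈ S, 0 < y i * ⟪θb, x i⟫) ∧
      (∀ j ∉ S, y j * ⟪θb, x j⟫ = 0) ∧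
      (∀ θ : EuclideanSpace ℝ (Fin d),
        (∃ j ∉ S, 0 < y j * ⟪θ, x j⟫) → ∃ k ∉ S, y k * ⟪θ, x k⟫ < 0) := by
  classical
  set P : Finset (Fin n) → Prop := fun S =>
    ∃ θ : EuclideanSpace ℝ (Fin d),
      (∀ i ∈ S, 0 < y i * ⟪θ, x i⟫) ∧ ∀ j ∉ S, y j * ⟪θ, x j⟫ = 0 with hP
  have h0 : P ∅ := ⟨0, by simp, by simp⟩
  set F : Finset (Finset (Fin n)) := Finset.univ.filter P with hF
  have hne : F.Nonempty := ⟨∅, by simp [hF, h0]⟩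
  obtain ⟨S, hSF, hmax⟩ := F.exists_max_image Finset.card hne
  have hPS : P S := (Finset.mem_filter.1 hSF).2
  obtain ⟨θb, hpos, hzero⟩ := hPS
  refine ⟨S, θb, hpos, hzero, ?_⟩
  intro θ ⟨j, hjS, hjpos⟩
  by_contra hcon
  push_neg at hcon
  -- every k ∉ S has y k * ⟪θ, x k⟫ ≥ 0
  -- pick small t > 0 so that θb + t • θ works on S
  set a : Fin n → ℝ := fun i => y i * ⟪θb, x i⟫ with ha
  set b : Fin n → ℝ := fun i => y i * ⟪θ, x i⟫ with hb
  have hev : ∀ᶠ t : ℝ in nhds 0, ∀ i ∈ S, 0 < a i + t * b i := by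
    rw [Filter.eventually_all_finset]
    intro i hi
    have hc : Filter.Tendsto (fun t : ℝ => a i + t * b i) (nhds 0) (nhds (a i)) := by
      have hcont : Continuous (fun t : ℝ => a i + t * b i) :=
        continuous_const.add (continuous_id.mul continuous_const)
      simpa using hcont.tendsto 0
    exact hc.eventually_const_lt (hpos i hi)
  have hev' : ∀ᶠ t : ℝ in nhdsWithin 0 (Set.Ioi 0),
      (∀ i ∈ S, 0 < a i + t * b i) ∧ t ∈ Set.Ioi (0:ℝ) :=
    (hev.filter_mono nhdsWithin_le_nhds).and self_mem_nhdsWithin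
  obtain ⟨t, hts, ht0⟩ := hev'.exists
  set S' : Finset (Fin n) := S ∪ Finset.univ.filter (fun k => k ∉ S ∧ 0 < b k) with hS'
  have hinner : ∀ i, y i * ⟪θb + t • θ, x i⟫ = a i + t * b i := by
    intro i
    rw [inner_add_left, real_inner_smul_left, ha, hb]
    ring
  have hPS' : P S' := by
    refine ⟨θb + t • θ, ?_, ?_⟩
    · intro i hi
      rw [hinner]
      rcases Finset.mem_union.1 hi with h | h
      · exact hts i h
      · obtain ⟨hiS, hib⟩ := (Finset.mem_filter.1 h).2
        have : a i = 0 := hzero i hiS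
        rw [this, zero_add]
        exact mul_pos ht0 hib
    · intro k hk
      rw [hinner]
      simp only [hS', Finset.mem_union, Finset.mem_filter, Finset.mem_univ, true_and,
        not_or, not_and, not_lt] at hk
      obtain ⟨hkS, hkb⟩ := hk
      have h1 : a k = 0 := hzero k hkS
      have h2 : b k = 0 := le_antisymm (hkb hkS) (hcon k hkS)
      rw [h1, h2]; ring
  have hsub : S ⊆ S' := Finset.subset_union_left
  have hjS' : j ∈ S' := by
    refine Finset.mem_union_right _ ?_
    simp only [Finset.mem_filter, Finset.mem_univ, true_and]
    exact ⟨hjS, hjpos⟩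
  have hlt : S.card < S'.card :=
    Finset.card_lt_card (Finset.ssubset_iff_of_subset hsub |>.2 ⟨j, hjS', hjS⟩)
  have : S'.card ≤ S.card := hmax S' (Finset.mem_filter.2 ⟨Finset.mem_univ _, hPS'⟩)
  omega
end

section
/- Let L : ℝ^d → ℝ be convex, differentiable and β-smooth, and let θ^(i+1) = θ^(i) − η_i ∇L(θ^(i)) be gradient descent with stepsizes 0 < η_i < 2/β. Then for every z ∈ ℝ^d and every t ≥ 1, 2 ∑_{i=0}^{t−1} η_i (L(θ^(i)) − L(z)) ≤ ‖θ^(0) − z‖₂² − ‖θ^(t) − z‖₂² + ∑_{i=0}^{t−1} (η_i / (1 − βη_i/2)) (L(θ^(i)) − L(θ^(i+1))). -/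
open scoped RealInnerProductSpace BigOperators

variable {F : Type*} [NormedAddCommGroup F] [InnerProductSpace ℝ F] [CompleteSpace F]

lemma line_hasDerivAt (L : F → ℝ) (hdiff : Differentiable ℝ L) (x v : F) (s : ℝ) :
    HasDerivAt (fun s : ℝ => L (x + s • v)) ⟪gradient L (x + s • v), v⟫ s := by
  have h1 : HasDerivAt (fun s : ℝ => x + s • v) v s := by
    simpa using ((hasDerivAt_id s).smul_const v).const_add x
  have h2 := (hdiff (x + s • v)).hasGradientAt.hasFDerivAt
  have := h2.comp_hasDerivAt s h1
  have h3 := this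
  simp [InnerProductSpace.toDual] at h3 ⊢
  exact h3

lemma conv_grad_ineq (L : F → ℝ) (hconv : ConvexOn ℝ Set.univ L)
    (hdiff : Differentiable ℝ L) (x y : F) :
    L x + ⟪gradient L x, y - x⟫ ≤ L y := by
  set g : ℝ → ℝ := fun s => L (x + s • (y - x)) with hg
  have hgconv : ConvexOn ℝ Set.univ g := by
    have h := hconv.comp_affineMap (AffineMap.lineMap x y : ℝ →ᵃ[ℝ] F)
    have he : g = L ∘ (AffineMap.lineMap x y : ℝ →ᵃ[ℝ] F) := by
      funext s
      simp only [hg, Function.comp_apply, AffineMap.lineMap_apply_module]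
      congr 1
      module
    rw [he]
    simpa using h
  have hd : HasDerivAt g ⟪gradient L x, y - x⟫ 0 := by
    have := line_hasDerivAt L hdiff x (y - x) 0
    simpa [hg] using this
  have hs := hgconv.le_slope_of_hasDerivAt (Set.mem_univ (0:ℝ)) (Set.mem_univ (1:ℝ)) one_pos hd
  have h0 : g 0 = L x := by simp [hg]
  have h1 : g 1 = L y := by simp [hg]
  rw [slope_def_field, h0, h1] at hs
  norm_num at hs
  have hgi : ⟪gradient L x, y - x⟫ = (fderiv ℝ L x) y - (fderiv ℝ L x) x := by
    rw [gradient, InnerProductSpace.toDual_symm_apply, map_sub]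
  linarith [hs]

lemma descent_ineq (L : F → ℝ) (β : ℝ) (hβ : 0 < β)
    (hdiff : Differentiable ℝ L)
    (hsmooth : ∀ a b : F, ‖gradient L a - gradient L b‖ ≤ β * ‖a - b‖)
    (x y : F) :
    L y ≤ L x + ⟪gradient L x, y - x⟫ + β / 2 * ‖y - x‖ ^ 2 := by
  set v := y - x with hv
  set φ : ℝ → ℝ := fun s => L (x + s • v) - s * ⟪gradient L x, v⟫ - β * ‖v‖ ^ 2 * s ^ 2 / 2 with hφ
  have hφd : ∀ s : ℝ, HasDerivAt φ
      (⟪gradient L (x + s • v), v⟫ - ⟪gradient L x, v⟫ - β * ‖v‖ ^ 2 * s) s := by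
    intro s
    have h1 := line_hasDerivAt L hdiff x v s
    have h2 : HasDerivAt (fun s : ℝ => s * ⟪gradient L x, v⟫) ⟪gradient L x, v⟫ s := by
      simpa using (hasDerivAt_id s).mul_const ⟪gradient L x, v⟫
    have h3 : HasDerivAt (fun s : ℝ => β * ‖v‖ ^ 2 * s ^ 2 / 2) (β * ‖v‖ ^ 2 * s) s := by
      have := ((hasDerivAt_pow 2 s).const_mul (β * ‖v‖ ^ 2)).div_const 2
      refine this.congr_deriv ?_
      norm_num
      ring
    exact (h1.sub h2).sub h3
  have hφdiff : Differentiable ℝ φ := fun s => (hφd s).differentiableAt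
  have hanti : AntitoneOn φ (Set.Icc (0:ℝ) 1) := by
    apply antitoneOn_of_deriv_nonpos (convex_Icc 0 1) hφdiff.continuous.continuousOn
      hφdiff.differentiableOn
    intro s hs
    rw [interior_Icc] at hs
    rw [(hφd s).deriv]
    have key : ⟪gradient L (x + s • v), v⟫ - ⟪gradient L x, v⟫ ≤ β * ‖v‖ ^ 2 * s := by
      have h1 : ⟪gradient L (x + s • v) - gradient L x, v⟫ ≤
          ‖gradient L (x + s • v) - gradient L x‖ * ‖v‖ := real_inner_le_norm _ _
      have h2 : ‖gradient L (x + s • v) - gradient L x‖ ≤ β * (s * ‖v‖) := by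
        have := hsmooth (x + s • v) x
        simpa [norm_smul, abs_of_pos hs.1] using this
      have h3 : ‖gradient L (x + s • v) - gradient L x‖ * ‖v‖ ≤ β * (s * ‖v‖) * ‖v‖ :=
        mul_le_mul_of_nonneg_right h2 (norm_nonneg v)
      rw [inner_sub_left] at h1
      nlinarith [h1, h3]
    linarith
  have hle : φ 1 ≤ φ 0 :=
    hanti (Set.mem_Icc.2 ⟨le_refl 0, zero_le_one⟩) (Set.mem_Icc.2 ⟨zero_le_one, le_refl 1⟩)
      zero_le_one
  have h0 : φ 0 = L x := by simp [hφ]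
  have h1 : φ 1 = L y - ⟪gradient L x, v⟫ - β * ‖v‖ ^ 2 / 2 := by
    simp [hφ, hv]
  rw [h0, h1] at hle
  have : ‖y - x‖ ^ 2 = ‖v‖ ^ 2 := by rw [hv]
  rw [this]
  linarith

/-- Bubeck-style regret bound for gradient descent on a convex `β`-smooth function
with stepsizes `0 < η_i < 2/β`. -/
theorem stmt_15 (d : ℕ) (β : ℝ) (hβ : 0 < β)
    (L : EuclideanSpace ℝ (Fin d) → ℝ)
    (hconv : ConvexOn ℝ Set.univ L)
    (hdiff : Differentiable ℝ L)
    (hsmooth : ∀ a b : EuclideanSpace ℝ (Fin d),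
      ‖gradient L a - gradient L b‖ ≤ β * ‖a - b‖)
    (η : ℕ → ℝ) (hη : ∀ i, 0 < η i) (hη2 : ∀ i, η i < 2 / β)
    (θ : ℕ → EuclideanSpace ℝ (Fin d))
    (hGD : ∀ i, θ (i + 1) = θ i - η i • gradient L (θ i)) :
    ∀ z : EuclideanSpace ℝ (Fin d), ∀ t : ℕ, 1 ≤ t →
      2 * ∑ i ∈ Finset.range t, η i * (L (θ i) - L z) ≤
        ‖θ 0 - z‖ ^ 2 - ‖θ t - z‖ ^ 2 +
          ∑ i ∈ Finset.range t, (η i / (1 - β * η i / 2)) * (L (θ i) - L (θ (i + 1))) := by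
  intro z t _
  have key : ∀ i : ℕ, 2 * (η i * (L (θ i) - L z)) ≤
      (‖θ i - z‖ ^ 2 - ‖θ (i + 1) - z‖ ^ 2) +
        (η i / (1 - β * η i / 2)) * (L (θ i) - L (θ (i + 1))) := by
    intro i
    set g := gradient L (θ i) with hgdef
    have hηi := hη i
    have hden : 0 < 1 - β * η i / 2 := by
      have := (lt_div_iff₀ hβ).mp (hη2 i)
      nlinarith
    have hcne : (1 - β * η i / 2) ≠ 0 := ne_of_gt hden
    have hstep : θ (i + 1) - z = (θ i - z) - η i • g := by
      rw [hGD i]; abel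
    have hnorm : ‖θ (i + 1) - z‖ ^ 2 =
        ‖θ i - z‖ ^ 2 - 2 * (η i * ⟪g, θ i - z⟫) + η i ^ 2 * ‖g‖ ^ 2 := by
      rw [hstep, @norm_sub_sq_real, real_inner_smul_right, norm_smul, real_inner_comm]
      simp [mul_pow, sq_abs]
      try ring
    have hcv : L (θ i) - L z ≤ ⟪g, θ i - z⟫ := by
      have h := conv_grad_ineq L hconv hdiff (θ i) z
      have he : ⟪g, z - θ i⟫ = -⟪g, θ i - z⟫ := by
        rw [show z - θ i = -(θ i - z) by abel, inner_neg_right]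
      rw [← hgdef, he] at h
      linarith
    have hdesc : L (θ (i + 1)) ≤ L (θ i) - η i * (1 - β * η i / 2) * ‖g‖ ^ 2 := by
      have h := descent_ineq L β hβ hdiff hsmooth (θ i) (θ (i + 1))
      have hd : θ (i + 1) - θ i = -(η i • g) := by rw [hGD i]; abel
      rw [hd, inner_neg_right, real_inner_smul_right, real_inner_self_eq_norm_sq,
        norm_neg, norm_smul, Real.norm_eq_abs, abs_of_pos hηi, ← hgdef] at h
      nlinarith [h]
    have hsq : η i ^ 2 * ‖g‖ ^ 2 ≤ (η i / (1 - β * η i / 2)) * (L (θ i) - L (θ (i + 1))) := by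
      have h5 : η i * (1 - β * η i / 2) * ‖g‖ ^ 2 ≤ L (θ i) - L (θ (i + 1)) := by linarith
      have h6 := mul_le_mul_of_nonneg_left h5 (le_of_lt (div_pos hηi hden))
      calc η i ^ 2 * ‖g‖ ^ 2
          = (η i / (1 - β * η i / 2)) * (η i * (1 - β * η i / 2) * ‖g‖ ^ 2) := by
            rw [show η i ^ 2 * ‖g‖ ^ 2 =
              η i ^ 2 * ‖g‖ ^ 2 * ((1 - β * η i / 2) / (1 - β * η i / 2)) by
                rw [div_self hcne]; ring]
            ring
        _ ≤ _ := h6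
    have hcv2 : 2 * (η i * (L (θ i) - L z)) ≤ 2 * (η i * ⟪g, θ i - z⟫) := by
      have := mul_le_mul_of_nonneg_left hcv (le_of_lt hηi)
      linarith
    linarith
  calc 2 * ∑ i ∈ Finset.range t, η i * (L (θ i) - L z)
      = ∑ i ∈ Finset.range t, 2 * (η i * (L (θ i) - L z)) := by rw [Finset.mul_sum]
    _ ≤ ∑ i ∈ Finset.range t, ((‖θ i - z‖ ^ 2 - ‖θ (i + 1) - z‖ ^ 2) +
          (η i / (1 - β * η i / 2)) * (L (θ i) - L (θ (i + 1)))) :=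
        Finset.sum_le_sum fun i _ => key i
    _ = (∑ i ∈ Finset.range t, (‖θ i - z‖ ^ 2 - ‖θ (i + 1) - z‖ ^ 2)) +
          ∑ i ∈ Finset.range t, (η i / (1 - β * η i / 2)) * (L (θ i) - L (θ (i + 1))) := by
        rw [Finset.sum_add_distrib]
    _ = ‖θ 0 - z‖ ^ 2 - ‖θ t - z‖ ^ 2 +
          ∑ i ∈ Finset.range t, (η i / (1 - β * η i / 2)) * (L (θ i) - L (θ (i + 1))) := by
        rw [Finset.sum_range_sub' (fun i => ‖θ i - z‖ ^ 2)]
end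

section
/- Suppose the data is linearly separable with maximum ℓ₂ margin γ* > 0, ‖x_i‖₂ ≤ 1, and the weights satisfy 1/M ≤ w_i ≤ M. Fix r > 1 and for each λ > 0 let θ_λ(w) be any global minimizer of the regularized risk L_λ(θ;w) = L(θ;w) + λ‖θ‖₂^r. Then ‖θ_λ(w)‖₂ → ∞ as λ → 0⁺: for every C > 0 there exists λ̃ > 0 such that ‖θ_λ(w)‖₂ > C for all 0 < λ < λ̃. -/
open scoped RealInnerProductSpace BigOperators

/-- For linearly separable data, the norm of any global minimizer of the weakly regularized
exponential risk `L_λ(θ;w) = L(θ;w) + λ‖θ‖^r` diverges as `λ → 0⁺`. -/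
theorem stmt_17 (n d : ℕ) (hn : 0 < n) (M : ℝ) (hM : 1 ≤ M)
    (x : Fin n → EuclideanSpace ℝ (Fin d)) (hx : ∀ i, ‖x i‖ ≤ 1)
    (y : Fin n → ℝ) (hy : ∀ i, y i = 1 ∨ y i = -1)
    (w : Fin n → ℝ) (hw : ∀ i, 1 / M ≤ w i ∧ w i ≤ M)
    (L : EuclideanSpace ℝ (Fin d) → ℝ)
    (hL : ∀ θ, L θ = (1 / (n : ℝ)) * ∑ i, w i * Real.exp (-(y i * ⟪θ, x i⟫)))
    (γ : ℝ) (hγ : 0 < γ)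
    (θs : EuclideanSpace ℝ (Fin d)) (hθsnorm : ‖θs‖ = 1)
    (hmargin : ∀ i, γ ≤ y i * ⟪θs, x i⟫)
    (hmax : ∀ u : EuclideanSpace ℝ (Fin d), ‖u‖ ≤ 1 → ∃ i, y i * ⟪u, x i⟫ ≤ γ)
    (r : ℝ) (hr : 1 < r) :
    ∀ C > (0 : ℝ), ∃ lamt > (0 : ℝ), ∀ lam : ℝ, 0 < lam → lam < lamt →
      ∀ θmin : EuclideanSpace ℝ (Fin d),
        (∀ θ : EuclideanSpace ℝ (Fin d),
          L θmin + lam * ‖θmin‖ ^ r ≤ L θ + lam * ‖θ‖ ^ r) →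
        C < ‖θmin‖ := by
  intro C hC
  have hM0 : (0:ℝ) < M := lt_of_lt_of_le one_pos hM
  have hlog : 0 ≤ Real.log (2 * M ^ 2) := Real.log_nonneg (by nlinarith)
  set t : ℝ := (C + Real.log (2 * M ^ 2) + 1) / γ with ht_def
  have ht : 0 < t := div_pos (by linarith) hγ
  have htγ : t * γ = C + Real.log (2 * M ^ 2) + 1 :=
    div_mul_cancel₀ _ (ne_of_gt hγ)
  have hexp : Real.exp (-(t * γ)) = Real.exp (-C) * (1 / (2 * M ^ 2)) * Real.exp (-1) := by
    rw [htγ, show -(C + Real.log (2 * M ^ 2) + 1)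
        = (-C) + (-(Real.log (2 * M ^ 2))) + (-1) by ring,
      Real.exp_add, Real.exp_add, Real.exp_neg (Real.log _), Real.exp_log (by positivity)]
    ring
  have he1 : Real.exp (-1 : ℝ) < 1 := Real.exp_lt_one_iff.mpr (by norm_num)
  have hkey : M * Real.exp (-(t * γ)) < Real.exp (-C) / (2 * M) := by
    have hec : 0 < Real.exp (-C) := Real.exp_pos _
    have heq : M * (Real.exp (-C) * (1 / (2 * M ^ 2)) * Real.exp (-1))
        = (Real.exp (-C) * Real.exp (-1)) / (2 * M) := by
      field_simp
    rw [hexp, heq]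
    have hnum : Real.exp (-C) * Real.exp (-1) < Real.exp (-C) := by
      nlinarith
    gcongr
  have htr : 0 < t ^ r := Real.rpow_pos_of_pos ht r
  refine ⟨(Real.exp (-C) / (2 * M)) / t ^ r, by positivity, ?_⟩
  intro lam hlam hlamlt θmin hmin
  by_contra hcon
  push_neg at hcon
  -- lower bound on L θmin
  have hlow : Real.exp (-C) / M ≤ L θmin := by
    rw [hL]
    have hterm : ∀ i, (1 / M) * Real.exp (-C) ≤ w i * Real.exp (-(y i * ⟪θmin, x i⟫)) := by
      intro i
      have habs : |⟪θmin, x i⟫| ≤ C := by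
        have h1 := abs_real_inner_le_norm θmin (x i)
        nlinarith [norm_nonneg θmin, norm_nonneg (x i), hx i]
      have hprod : y i * ⟪θmin, x i⟫ ≤ C := by
        rcases hy i with h | h <;> rw [h] <;>
          [skip; rw [neg_mul, one_mul]] <;>
          nlinarith [abs_le.mp habs, neg_abs_le (⟪θmin, x i⟫ : ℝ), le_abs_self (⟪θmin, x i⟫ : ℝ)]
      have hexp' : Real.exp (-C) ≤ Real.exp (-(y i * ⟪θmin, x i⟫)) :=
        Real.exp_le_exp.mpr (by linarith)
      have hw1 := (hw i).1
      have : (0:ℝ) < 1 / M := by positivity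
      exact mul_le_mul hw1 hexp' (le_of_lt (Real.exp_pos _)) (le_trans (le_of_lt this) hw1)
    have hsum : (n : ℝ) * ((1 / M) * Real.exp (-C)) ≤
        ∑ i, w i * Real.exp (-(y i * ⟪θmin, x i⟫)) := by
      calc (n : ℝ) * ((1 / M) * Real.exp (-C))
          = ∑ _i : Fin n, (1 / M) * Real.exp (-C) := by
            rw [Finset.sum_const, Finset.card_univ, Fintype.card_fin, nsmul_eq_mul]
        _ ≤ _ := Finset.sum_le_sum fun i _ => hterm i
    have hn' : (0:ℝ) < (n : ℝ) := by exact_mod_cast hn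
    calc Real.exp (-C) / M = (1 / (n:ℝ)) * ((n : ℝ) * ((1 / M) * Real.exp (-C))) := by
          field_simp
      _ ≤ _ := mul_le_mul_of_nonneg_left hsum (by positivity)
  -- upper bound on L (t • θs)
  have hup : L (t • θs) ≤ M * Real.exp (-(t * γ)) := by
    rw [hL]
    have hterm : ∀ i, w i * Real.exp (-(y i * ⟪t • θs, x i⟫)) ≤ M * Real.exp (-(t * γ)) := by
      intro i
      have hin : (⟪t • θs, x i⟫ : ℝ) = t * ⟪θs, x i⟫ := real_inner_smul_left _ _ _
      have hmar := hmargin i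
      have : t * γ ≤ y i * ⟪t • θs, x i⟫ := by
        rw [hin, show y i * (t * ⟪θs, x i⟫) = t * (y i * ⟪θs, x i⟫) by ring]
        exact mul_le_mul_of_nonneg_left hmar (le_of_lt ht)
      have hexp' : Real.exp (-(y i * ⟪t • θs, x i⟫)) ≤ Real.exp (-(t * γ)) :=
        Real.exp_le_exp.mpr (by linarith)
      exact mul_le_mul (hw i).2 hexp' (le_of_lt (Real.exp_pos _)) (le_of_lt hM0)
    have hsum : ∑ i, w i * Real.exp (-(y i * ⟪t • θs, x i⟫)) ≤
        (n : ℝ) * (M * Real.exp (-(t * γ))) := by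
      calc ∑ i, w i * Real.exp (-(y i * ⟪t • θs, x i⟫))
          ≤ ∑ _i : Fin n, M * Real.exp (-(t * γ)) := Finset.sum_le_sum fun i _ => hterm i
        _ = (n : ℝ) * (M * Real.exp (-(t * γ))) := by
            rw [Finset.sum_const, Finset.card_univ, Fintype.card_fin, nsmul_eq_mul]
    have hn' : (0:ℝ) < (n : ℝ) := by exact_mod_cast hn
    calc (1 / (n : ℝ)) * ∑ i, w i * Real.exp (-(y i * ⟪t • θs, x i⟫))
        ≤ (1 / (n : ℝ)) * ((n : ℝ) * (M * Real.exp (-(t * γ)))) :=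
          mul_le_mul_of_nonneg_left hsum (by positivity)
      _ = M * Real.exp (-(t * γ)) := by field_simp
  have hnorm : ‖t • θs‖ = t := by
    rw [norm_smul, Real.norm_eq_abs, abs_of_pos ht, hθsnorm, mul_one]
  have hmin' := hmin (t • θs)
  rw [hnorm] at hmin'
  have hlt : lam * t ^ r < Real.exp (-C) / (2 * M) := by
    have := mul_lt_mul_of_pos_right hlamlt htr
    rwa [div_mul_cancel₀ _ (ne_of_gt htr)] at this
  have hnn : 0 ≤ lam * ‖θmin‖ ^ r :=
    mul_nonneg (le_of_lt hlam) (Real.rpow_nonneg (norm_nonneg _) r)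
  have hsplit : Real.exp (-C) / (2 * M) + Real.exp (-C) / (2 * M) = Real.exp (-C) / M := by
    field_simp
    ring
  linarith
end

section
/- Let the data be partitioned into a maximal separable subset S and non-separable subset N, let γ_sep > 0 and the unit vector θ*_sep be the maximum margin and max-margin direction on S subject to y_j⟨θ*_sep, x_j⟩ ≥ 0 for all j ∈ N, and let θ̃(w) be a minimizer of the restricted risk L_N(θ;w) = (1/n) ∑_{j∈N} w_j exp(−y_j⟨θ,x_j⟩). Assume ‖x_i‖₂ ≤ 1 and w_i ≤ M. Then for every t ≥ 1 the comparator z_t := θ̃(w) + (log t / γ_sep) θ*_sep satisfies L(z_t; w) ≤ inf_{θ ∈ ℝ^d} L(θ;w) + M · exp(‖θ̃(w)‖₂) / t. -/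
open scoped RealInnerProductSpace BigOperators

/-- The comparator `z_t = θ̃(w) + (log t / γ_sep) θ*_sep` nearly minimizes the weighted
exponential risk: `L(z_t;w) ≤ inf_θ L(θ;w) + M exp(‖θ̃(w)‖)/t`. -/
theorem stmt_18 (n d : ℕ) (M : ℝ) (hM : 1 ≤ M)
    (x : Fin n → EuclideanSpace ℝ (Fin d)) (hx : ∀ i, ‖x i‖ ≤ 1)
    (y : Fin n → ℝ) (hy : ∀ i, y i = 1 ∨ y i = -1)
    (w : Fin n → ℝ) (hw : ∀ i, 1 / M ≤ w i ∧ w i ≤ M)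
    (L : EuclideanSpace ℝ (Fin d) → ℝ)
    (hL : ∀ θ, L θ = (1 / (n : ℝ)) * ∑ i, w i * Real.exp (-(y i * ⟪θ, x i⟫)))
    -- maximal separable partition: `S` separable via `θb`, complement `N` non-separable
    (S : Finset (Fin n)) (θb : EuclideanSpace ℝ (Fin d))
    (hSsep : ∀ i ∈ S, 0 < y i * ⟪θb, x i⟫)
    (hNzero : ∀ j ∉ S, y j * ⟪θb, x j⟫ = 0)
    (hSmax : ∀ θ : EuclideanSpace ℝ (Fin d),
      (∃ j ∉ S, 0 < y j * ⟪θ, x j⟫) → ∃ k ∉ S, y k * ⟪θ, x k⟫ < 0)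
    -- max-margin direction on `S` subject to nonnegativity on `N`
    (γsep : ℝ) (hγsep : 0 < γsep)
    (θss : EuclideanSpace ℝ (Fin d)) (hθssnorm : ‖θss‖ = 1)
    (hmarginS : ∀ i ∈ S, γsep ≤ y i * ⟪θss, x i⟫)
    (hmarginN : ∀ j ∉ S, 0 ≤ y j * ⟪θss, x j⟫)
    (hγmax : ∀ u : EuclideanSpace ℝ (Fin d), ‖u‖ ≤ 1 →
      (∀ j ∉ S, 0 ≤ y j * ⟪u, x j⟫) → ∃ i ∈ S, y i * ⟪u, x i⟫ ≤ γsep)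
    -- minimizer of the restricted risk on the non-separable part
    (LN : EuclideanSpace ℝ (Fin d) → ℝ)
    (hLN : ∀ θ, LN θ = (1 / (n : ℝ)) * ∑ j ∈ Sᶜ, w j * Real.exp (-(y j * ⟪θ, x j⟫)))
    (θt : EuclideanSpace ℝ (Fin d))
    (hθt : ∀ θ : EuclideanSpace ℝ (Fin d), LN θt ≤ LN θ) :
    ∀ t : ℕ, 1 ≤ t →
      L (θt + (Real.log t / γsep) • θss) ≤
        (⨅ θ : EuclideanSpace ℝ (Fin d), L θ) + M * Real.exp ‖θt‖ / t := by

  intro t ht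
  have ht1 : (1:ℝ) ≤ (t:ℝ) := by exact_mod_cast ht
  have htpos : (0:ℝ) < (t:ℝ) := lt_of_lt_of_le one_pos ht1
  have hlog : 0 ≤ Real.log t := Real.log_nonneg ht1
  have hMpos : (0:ℝ) < M := lt_of_lt_of_le one_pos hM
  set c : ℝ := Real.log t / γsep with hc
  have hcnn : 0 ≤ c := div_nonneg hlog hγsep.le
  set z := θt + c • θss with hz
  set K : ℝ := M * Real.exp ‖θt‖ / t with hK
  have hKnn : 0 ≤ K := by positivity
  have hwpos : ∀ i, 0 < w i := fun i =>
    lt_of_lt_of_le (by positivity) (hw i).1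
  have hinner : ∀ i, y i * ⟪z, x i⟫ = y i * ⟪θt, x i⟫ + c * (y i * ⟪θss, x i⟫) := by
    intro i
    rw [hz, inner_add_left, real_inner_smul_left]
    ring
  -- split L into S part and N part
  have hsplit : ∀ θ, L θ
      = (1/(n:ℝ)) * ∑ i ∈ S, w i * Real.exp (-(y i * ⟪θ, x i⟫)) + LN θ := by
    intro θ
    rw [hL, hLN, ← mul_add, Finset.sum_add_sum_compl]
  have hLNle : ∀ θ, LN θ ≤ L θ := by
    intro θ
    rw [hsplit θ]
    have : 0 ≤ (1/(n:ℝ)) * ∑ i ∈ S, w i * Real.exp (-(y i * ⟪θ, x i⟫)) := by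
      apply mul_nonneg (by positivity)
      exact Finset.sum_nonneg fun i _ => (mul_pos (hwpos i) (Real.exp_pos _)).le
    linarith
  have hinf : LN θt ≤ ⨅ θ : EuclideanSpace ℝ (Fin d), L θ :=
    le_ciInf fun θ => (hθt θ).trans (hLNle θ)
  -- N part of z is at most LN θt
  have hNz : LN z ≤ LN θt := by
    rw [hLN, hLN]
    apply mul_le_mul_of_nonneg_left _ (by positivity)
    apply Finset.sum_le_sum
    intro j hj
    have hj' : j ∉ S := Finset.mem_compl.mp hj
    apply mul_le_mul_of_nonneg_left _ (hwpos j).le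
    apply Real.exp_le_exp.mpr
    have h1 : 0 ≤ c * (y j * ⟪θss, x j⟫) := mul_nonneg hcnn (hmarginN j hj')
    rw [hinner j]
    linarith
  -- S part of z is at most K
  have hSz : (1/(n:ℝ)) * ∑ i ∈ S, w i * Real.exp (-(y i * ⟪z, x i⟫)) ≤ K := by
    have hterm : ∀ i ∈ S, w i * Real.exp (-(y i * ⟪z, x i⟫)) ≤ K := by
      intro i hi
      have hyabs : |y i| = 1 := by rcases hy i with h | h <;> rw [h] <;> norm_num
      have h1 : -‖θt‖ ≤ y i * ⟪θt, x i⟫ := by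
        have := abs_le.mp (le_trans (le_of_eq (abs_mul _ _)) ?_ :
          |y i * ⟪θt, x i⟫| ≤ ‖θt‖)
        · linarith [this.1]
        · rw [hyabs, one_mul]
          calc |⟪θt, x i⟫| ≤ ‖θt‖ * ‖x i‖ := abs_real_inner_le_norm _ _
            _ ≤ ‖θt‖ * 1 := by
                apply mul_le_mul_of_nonneg_left (hx i) (norm_nonneg _)
            _ = ‖θt‖ := mul_one _
      have h2 : Real.log t ≤ c * (y i * ⟪θss, x i⟫) := by
        have := mul_le_mul_of_nonneg_left (hmarginS i hi) hcnn
        have hcg : c * γsep = Real.log t := div_mul_cancel₀ _ (ne_of_gt hγsep)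
        linarith
      have hexp : Real.exp (-(y i * ⟪z, x i⟫)) ≤ Real.exp ‖θt‖ / t := by
        have : Real.exp (-(y i * ⟪z, x i⟫)) ≤ Real.exp (‖θt‖ - Real.log t) := by
          apply Real.exp_le_exp.mpr
          rw [hinner i]; linarith
        rwa [Real.exp_sub, Real.exp_log htpos] at this
      calc w i * Real.exp (-(y i * ⟪z, x i⟫))
          ≤ M * (Real.exp ‖θt‖ / t) := by
            apply mul_le_mul (hw i).2 hexp (le_of_lt (Real.exp_pos _)) hMpos.le
        _ = K := by rw [hK]; ring
    calc (1/(n:ℝ)) * ∑ i ∈ S, w i * Real.exp (-(y i * ⟪z, x i⟫))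
        ≤ (1/(n:ℝ)) * ∑ _i ∈ S, K := by
          apply mul_le_mul_of_nonneg_left (Finset.sum_le_sum hterm) (by positivity)
      _ = (1/(n:ℝ)) * (S.card * K) := by rw [Finset.sum_const, nsmul_eq_mul]
      _ ≤ (1/(n:ℝ)) * (n * K) := by
          apply mul_le_mul_of_nonneg_left _ (by positivity)
          apply mul_le_mul_of_nonneg_right _ hKnn
          exact_mod_cast Finset.card_le_card (Finset.subset_univ S) |>.trans
            (le_of_eq (Finset.card_univ.trans (Fintype.card_fin n)))
      _ ≤ K := by
          rcases Nat.eq_zero_or_pos n with hn | hn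
          · simp [hn, hKnn]
          · have hn' : ((n:ℝ)) ≠ 0 := by positivity
            rw [show (1/(n:ℝ)) * ((n:ℝ)*K) = K by field_simp]
  rw [hsplit z]
  linarith
end

section
/- Let the data be partitioned into a maximal separable subset S and non-separable subset N, with γ_sep > 0 the maximum margin on S subject to being nonnegative on N, and θ̃(w) a minimizer of the restricted risk L_N(θ;w) = (1/n) ∑_{j∈N} w_j exp(−y_j⟨θ,x_j⟩). Run gradient descent θ^(0) = 0, θ^(t+1) = θ^(t) − η ∇_θ L(θ^(t);w) on the weighted exponential risk with constant stepsize η satisfying η L(θ^(t);w) ≤ 1 for all t. Then for every t ≥ 1, L(θ^(t);w) ≤ inf_{θ ∈ ℝ^d} L(θ;w) + M·exp(‖θ̃(w)‖₂)/t + (‖θ̃(w)‖₂ + log t / γ_sep)² / (2ηt). -/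
open scoped RealInnerProductSpace BigOperators

/-- `cosh r - 1 + r²/2 ≤ r sinh r` for `r ≥ 0`. -/
lemma key_cosh (r : ℝ) (hr : 0 ≤ r) :
    Real.cosh r - 1 + r ^ 2 / 2 ≤ r * Real.sinh r := by
  have hder : ∀ s : ℝ, HasDerivAt (fun u => u * Real.sinh u - Real.cosh u - u ^ 2 / 2)
      (s * (Real.cosh s - 1)) s := by
    intro s
    have h1 : HasDerivAt (fun u : ℝ => u * Real.sinh u)
        (1 * Real.sinh s + s * Real.cosh s) s :=
      (hasDerivAt_id s).mul (Real.hasDerivAt_sinh s)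
    have h2 := Real.hasDerivAt_cosh s
    have h3 : HasDerivAt (fun u : ℝ => u ^ 2 / 2) s s := by
      simpa using (hasDerivAt_pow 2 s).div_const 2
    refine ((h1.sub h2).sub h3).congr_deriv ?_
    ring
  have mono : MonotoneOn (fun u : ℝ => u * Real.sinh u - Real.cosh u - u ^ 2 / 2)
      (Set.Ici (0 : ℝ)) := by
    apply monotoneOn_of_deriv_nonneg (convex_Ici 0)
    · exact (Continuous.continuousOn (by continuity))
    · intro s hs
      exact (hder s).differentiableAt.differentiableWithinAt
    · intro s hs
      rw [interior_Ici] at hs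
      rw [(hder s).deriv]
      have h0 : (0:ℝ) ≤ s := le_of_lt hs
      nlinarith [Real.one_le_cosh s]
  have h := mono Set.self_mem_Ici hr hr
  simp only [Real.sinh_zero, Real.cosh_zero, mul_zero, zero_mul] at h
  nlinarith [h]

/-- chord bound for `exp` on `[-r, r]`. -/
lemma chord_exp (r δ : ℝ) (hr : 0 < r) (h1 : -r ≤ δ) (h2 : δ ≤ r) :
    Real.exp δ ≤ ((r - δ) * Real.exp (-r) + (r + δ) * Real.exp r) / (2 * r) := by
  have hd1 : 0 ≤ r - δ := by linarith
  have hd2 : 0 ≤ r + δ := by linarith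
  have ha : 0 ≤ (r - δ) / (2 * r) := by positivity
  have hb : 0 ≤ (r + δ) / (2 * r) := by positivity
  have hab : (r - δ) / (2 * r) + (r + δ) / (2 * r) = 1 := by
    field_simp
    ring
  have := convexOn_exp.2 (Set.mem_univ (-r)) (Set.mem_univ r) ha hb hab
  have harg : ((r - δ) / (2 * r)) • (-r) + ((r + δ) / (2 * r)) • r = δ := by
    simp only [smul_eq_mul]
    field_simp
    ring
  rw [harg] at this
  calc Real.exp δ ≤ (r - δ) / (2 * r) * Real.exp (-r) + (r + δ) / (2 * r) * Real.exp r := by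
        simpa [smul_eq_mul] using this
    _ = ((r - δ) * Real.exp (-r) + (r + δ) * Real.exp r) / (2 * r) := by ring

/-- Gradient of the weighted exponential risk. -/
lemma grad_L {n d : ℕ} (c : Fin n → ℝ) (x : Fin n → EuclideanSpace ℝ (Fin d))
    (y : Fin n → ℝ) (v : EuclideanSpace ℝ (Fin d)) :
    HasGradientAt (fun v => ∑ i, c i * Real.exp (-(y i * ⟪v, x i⟫)))
      (∑ i, (-(c i * Real.exp (-(y i * ⟪v, x i⟫))) * y i) • x i) v := by
  have hterm : ∀ i : Fin n, HasFDerivAt (fun v : EuclideanSpace ℝ (Fin d) =>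
      c i * Real.exp (-(y i * ⟪v, x i⟫)))
      ((-(c i * Real.exp (-(y i * ⟪v, x i⟫))) * y i) • innerSL ℝ (x i)) v := by
    intro i
    have hlin : HasFDerivAt (fun v : EuclideanSpace ℝ (Fin d) => -(y i * ⟪v, x i⟫))
        ((-(y i)) • innerSL ℝ (x i)) v := by
      have feq : (fun v : EuclideanSpace ℝ (Fin d) => -(y i * ⟪v, x i⟫)) =
          fun v => ((-(y i)) • innerSL ℝ (x i)) v := by
        funext u
        simp only [ContinuousLinearMap.coe_smul', Pi.smul_apply, innerSL_apply_apply, smul_eq_mul]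
        rw [real_inner_comm]
        ring
      rw [feq]
      exact ((-(y i)) • innerSL ℝ (x i)).hasFDerivAt
    have hexp := hlin.exp
    have := hexp.const_mul (c i)
    refine this.congr_fderiv ?_
    rw [smul_smul, smul_smul]
    congr 1
    ring
  have hsum := HasFDerivAt.sum (u := (Finset.univ : Finset (Fin n))) (fun i _ => hterm i)
  rw [hasGradientAt_iff_hasFDerivAt]
  refine HasFDerivAt.congr_fderiv (by simpa only [Finset.sum_fn] using hsum) ?_
  ext h
  simp only [ContinuousLinearMap.coe_sum', Finset.sum_apply, ContinuousLinearMap.coe_smul',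
    Pi.smul_apply, innerSL_apply_apply, smul_eq_mul]
  rw [InnerProductSpace.toDual_apply_apply, sum_inner]
  congr 1
  ext i
  rw [real_inner_smul_left]

/-- One-step descent bound for the exponential risk. -/
lemma descent_sum {n d : ℕ} (p : Fin n → ℝ) (hp : ∀ i, 0 ≤ p i)
    (x : Fin n → EuclideanSpace ℝ (Fin d)) (hx : ∀ i, ‖x i‖ ≤ 1)
    (y : Fin n → ℝ) (hy : ∀ i, |y i| = 1)
    (η : ℝ) (hη : 0 < η) (hηL : η * ∑ i, p i ≤ 1)
    (G : EuclideanSpace ℝ (Fin d)) (hG : G = ∑ i, (-(p i) * y i) • x i) :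
    ∑ i, p i * Real.exp (η * (y i * ⟪G, x i⟫)) ≤ (∑ i, p i) - η / 2 * ‖G‖ ^ 2 := by
  set Lv := ∑ i, p i with hLv
  have hL0 : 0 ≤ Lv := Finset.sum_nonneg fun i _ => hp i
  have key1 : ∑ i, p i * (y i * ⟪G, x i⟫) = -‖G‖ ^ 2 := by
    have h1 : (‖G‖ : ℝ) ^ 2 = ⟪G, G⟫ := (real_inner_self_eq_norm_sq G).symm
    have h2 : ⟪G, G⟫ = ∑ i, (-(p i) * y i) * ⟪x i, G⟫ := by
      nth_rewrite 1 [hG]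
      rw [sum_inner]
      exact Finset.sum_congr rfl fun i _ => real_inner_smul_left _ _ _
    rw [h1, h2, ← Finset.sum_neg_distrib]
    refine Finset.sum_congr rfl fun i _ => ?_
    rw [real_inner_comm]
    ring
  have hdb : ∀ i, |y i * ⟪G, x i⟫| ≤ ‖G‖ := by
    intro i
    rw [abs_mul, hy i, one_mul]
    calc |⟪G, x i⟫| ≤ ‖G‖ * ‖x i‖ := abs_real_inner_le_norm G (x i)
      _ ≤ ‖G‖ * 1 := mul_le_mul_of_nonneg_left (hx i) (norm_nonneg G)
      _ = ‖G‖ := mul_one _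
  rcases eq_or_lt_of_le (norm_nonneg G) with hg0 | hg
  · have hGz : G = 0 := by rwa [eq_comm, norm_eq_zero] at hg0
    simp [hGz, hLv]
  · set g := ‖G‖ with hgdef
    set r := η * g with hrdef
    have hr : 0 < r := mul_pos hη hg
    have hδ : ∀ i, -r ≤ η * (y i * ⟪G, x i⟫) ∧ η * (y i * ⟪G, x i⟫) ≤ r := by
      intro i
      have h1 : |η * (y i * ⟪G, x i⟫)| ≤ r := by
        rw [abs_mul, abs_of_pos hη]
        exact mul_le_mul_of_nonneg_left (hdb i) (le_of_lt hη)
      exact ⟨neg_le_of_abs_le h1, le_of_abs_le h1⟩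
    set a := Real.exp (-r) with hadef
    set b := Real.exp r with hbdef
    have hsum1 : ∑ i, p i * Real.exp (η * (y i * ⟪G, x i⟫)) ≤
        ∑ i, ((a * r + b * r) / (2 * r) * p i +
          (b - a) / (2 * r) * η * (p i * (y i * ⟪G, x i⟫))) := by
      refine Finset.sum_le_sum fun i _ => ?_
      have hc := chord_exp r (η * (y i * ⟪G, x i⟫)) hr (hδ i).1 (hδ i).2
      calc p i * Real.exp (η * (y i * ⟪G, x i⟫)) ≤
          p i * (((r - η * (y i * ⟪G, x i⟫)) * a + (r + η * (y i * ⟪G, x i⟫)) * b) / (2 * r)) :=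
            mul_le_mul_of_nonneg_left hc (hp i)
        _ = (a * r + b * r) / (2 * r) * p i +
            (b - a) / (2 * r) * η * (p i * (y i * ⟪G, x i⟫)) := by
            field_simp
            ring
    have hsum2 : ∑ i, ((a * r + b * r) / (2 * r) * p i +
          (b - a) / (2 * r) * η * (p i * (y i * ⟪G, x i⟫))) =
        Real.cosh r * Lv - Real.sinh r * g := by
      rw [Finset.sum_add_distrib, ← Finset.mul_sum, ← Finset.mul_sum, key1, ← hLv]
      have e1 : (a * r + b * r) / (2 * r) = Real.cosh r := by
        rw [Real.cosh_eq, hadef, hbdef]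
        field_simp
        ring
      have e2 : (b - a) / (2 * r) * η * (-g ^ 2) = -(Real.sinh r * g) := by
        rw [Real.sinh_eq, hadef, hbdef, hrdef]
        field_simp
      rw [e1, e2]
      ring
    have hgL : r * Lv ≤ g := by
      have h := mul_le_mul_of_nonneg_left hηL (le_of_lt hg)
      calc r * Lv = g * (η * Lv) := by rw [hrdef]; ring
        _ ≤ g * 1 := h
        _ = g := mul_one g
    have hs2 : 0 ≤ Real.sinh r - r / 2 := by
      have := (Real.self_le_sinh_iff).mpr hr.le
      linarith
    have hkey := key_cosh r hr.le
    have h1 : Lv * (Real.cosh r - 1 + r ^ 2 / 2) ≤ Lv * (r * Real.sinh r) :=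
      mul_le_mul_of_nonneg_left hkey hL0
    have h2 : 0 ≤ (g - r * Lv) * (Real.sinh r - r / 2) :=
      mul_nonneg (by linarith) hs2
    have hfin : Real.cosh r * Lv - Real.sinh r * g ≤ Lv - η / 2 * g ^ 2 := by
      have e3 : η / 2 * g ^ 2 = r * g / 2 := by rw [hrdef]; ring
      rw [e3]
      nlinarith [h1, h2]
    calc ∑ i, p i * Real.exp (η * (y i * ⟪G, x i⟫)) ≤ _ := hsum1
      _ = Real.cosh r * Lv - Real.sinh r * g := hsum2
      _ ≤ Lv - η / 2 * g ^ 2 := hfin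

set_option maxHeartbeats 1600000

/-- Risk convergence of gradient descent on partially non-separable data:
`L(θ^(t);w) ≤ inf_θ L(θ;w) + M exp(‖θ̃(w)‖)/t + (‖θ̃(w)‖ + log t / γ_sep)² / (2ηt)`. -/
theorem stmt_19 (n d : ℕ) (M : ℝ) (hM : 1 ≤ M)
    (x : Fin n → EuclideanSpace ℝ (Fin d)) (hx : ∀ i, ‖x i‖ ≤ 1)
    (y : Fin n → ℝ) (hy : ∀ i, y i = 1 ∨ y i = -1)
    (w : Fin n → ℝ) (hw : ∀ i, 1 / M ≤ w i ∧ w i ≤ M)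
    (L : EuclideanSpace ℝ (Fin d) → ℝ)
    (hL : ∀ θ, L θ = (1 / (n : ℝ)) * ∑ i, w i * Real.exp (-(y i * ⟪θ, x i⟫)))
    -- maximal separable partition: `S` separable via `θb`, complement `N` non-separable
    (S : Finset (Fin n)) (θb : EuclideanSpace ℝ (Fin d))
    (hSsep : ∀ i ∈ S, 0 < y i * ⟪θb, x i⟫)
    (hNzero : ∀ j ∉ S, y j * ⟪θb, x j⟫ = 0)
    (hSmax : ∀ θ : EuclideanSpace ℝ (Fin d),
      (∃ j ∉ S, 0 < y j * ⟪θ, x j⟫) → ∃ k ∉ S, y k * ⟪θ, x k⟫ < 0)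
    -- max margin on `S` subject to nonnegativity on `N`
    (γsep : ℝ) (hγsep : 0 < γsep)
    (θss : EuclideanSpace ℝ (Fin d)) (hθssnorm : ‖θss‖ = 1)
    (hmarginS : ∀ i ∈ S, γsep ≤ y i * ⟪θss, x i⟫)
    (hmarginN : ∀ j ∉ S, 0 ≤ y j * ⟪θss, x j⟫)
    (hγmax : ∀ u : EuclideanSpace ℝ (Fin d), ‖u‖ ≤ 1 →
      (∀ j ∉ S, 0 ≤ y j * ⟪u, x j⟫) → ∃ i ∈ S, y i * ⟪u, x i⟫ ≤ γsep)
    -- minimizer of the restricted risk on the non-separable part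
    (LN : EuclideanSpace ℝ (Fin d) → ℝ)
    (hLN : ∀ θ, LN θ = (1 / (n : ℝ)) * ∑ j ∈ Sᶜ, w j * Real.exp (-(y j * ⟪θ, x j⟫)))
    (θt : EuclideanSpace ℝ (Fin d))
    (hθt : ∀ θ : EuclideanSpace ℝ (Fin d), LN θt ≤ LN θ)
    -- gradient descent with constant stepsize
    (η : ℝ) (hη : 0 < η)
    (θ : ℕ → EuclideanSpace ℝ (Fin d)) (hθ0 : θ 0 = 0)
    (hGD : ∀ t, θ (t + 1) = θ t - η • gradient L (θ t))
    (hηL : ∀ t, η * L (θ t) ≤ 1) :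
    ∀ t : ℕ, 1 ≤ t →
      L (θ t) ≤ (⨅ θ' : EuclideanSpace ℝ (Fin d), L θ') +
        M * Real.exp ‖θt‖ / t +
        (‖θt‖ + Real.log t / γsep) ^ 2 / (2 * η * t) := by
  -- basic facts
  have hM0 : (0:ℝ) < M := by linarith
  have hwpos : ∀ i, 0 < w i := fun i => lt_of_lt_of_le (by positivity) (hw i).1
  have habsy : ∀ i, |y i| = 1 := fun i => by rcases hy i with h | h <;> simp [h]
  obtain ⟨i0, hi0S, -⟩ := hγmax 0 (by simp) (fun j hj => by simp)
  have hn : 0 < n := i0.pos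
  have hnR : (0:ℝ) < (n:ℝ) := by exact_mod_cast hn
  -- pointwise weights
  set p : EuclideanSpace ℝ (Fin d) → Fin n → ℝ :=
    fun v i => (1 / (n:ℝ) * w i) * Real.exp (-(y i * ⟪v, x i⟫)) with hpdef
  have hp0 : ∀ v i, 0 ≤ p v i := by
    intro v i
    have := (hwpos i).le
    have he := (Real.exp_pos (-(y i * ⟪v, x i⟫))).le
    positivity
  have hLsum : ∀ v, L v = ∑ i, p v i := by
    intro v
    rw [hL v, Finset.mul_sum]
    exact Finset.sum_congr rfl fun i _ => by rw [hpdef]; ring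
  -- the gradient
  set G : EuclideanSpace ℝ (Fin d) → EuclideanSpace ℝ (Fin d) :=
    fun v => ∑ i, (-(p v i) * y i) • x i with hGdef
  have hLfun : L = fun v => ∑ i, (1 / (n:ℝ) * w i) * Real.exp (-(y i * ⟪v, x i⟫)) := by
    funext v
    rw [hL v, Finset.mul_sum]
    exact Finset.sum_congr rfl fun i _ => by ring
  have hgrad : ∀ v, HasGradientAt L (G v) v := by
    intro v
    rw [hLfun]
    exact grad_L (fun i => 1 / (n:ℝ) * w i) x y v
  have hstep : ∀ s, θ (s + 1) = θ s - η • G (θ s) := by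
    intro s
    rw [hGD s, (hgrad (θ s)).gradient]
  -- convexity : first-order lower bound
  have hconv : ∀ v u : EuclideanSpace ℝ (Fin d), L v + ⟪G v, u - v⟫ ≤ L u := by
    intro v u
    have hip : ⟪G v, u - v⟫ =
        ∑ i, p v i * (y i * ⟪v, x i⟫ - y i * ⟪u, x i⟫) := by
      rw [hGdef, sum_inner]
      refine Finset.sum_congr rfl fun i _ => ?_
      rw [real_inner_smul_left, real_inner_comm, inner_sub_left]
      ring
    rw [hLsum v, hLsum u, hip, ← Finset.sum_add_distrib]
    refine Finset.sum_le_sum fun i _ => ?_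
    have harg : -(y i * ⟪v, x i⟫) + (y i * ⟪v, x i⟫ - y i * ⟪u, x i⟫) =
        -(y i * ⟪u, x i⟫) := by ring
    have hpu : p u i = p v i * Real.exp (y i * ⟪v, x i⟫ - y i * ⟪u, x i⟫) := by
      show (1 / (n:ℝ) * w i) * Real.exp (-(y i * ⟪u, x i⟫)) =
        (1 / (n:ℝ) * w i) * Real.exp (-(y i * ⟪v, x i⟫)) *
          Real.exp (y i * ⟪v, x i⟫ - y i * ⟪u, x i⟫)
      conv_rhs => rw [mul_assoc, ← Real.exp_add, harg]
    have h1 : (y i * ⟪v, x i⟫ - y i * ⟪u, x i⟫) + 1 ≤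
        Real.exp (y i * ⟪v, x i⟫ - y i * ⟪u, x i⟫) := Real.add_one_le_exp _
    have hpv := hp0 v i
    calc p v i + p v i * (y i * ⟪v, x i⟫ - y i * ⟪u, x i⟫)
        = p v i * ((y i * ⟪v, x i⟫ - y i * ⟪u, x i⟫) + 1) := by ring
      _ ≤ p v i * Real.exp (y i * ⟪v, x i⟫ - y i * ⟪u, x i⟫) :=
          mul_le_mul_of_nonneg_left h1 hpv
      _ = p u i := hpu.symm
  -- per-step descent
  have hdesc : ∀ s : ℕ, L (θ (s + 1)) ≤ L (θ s) - η / 2 * ‖G (θ s)‖ ^ 2 := by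
    intro s
    rw [hstep s]
    have hLθ' : L (θ s - η • G (θ s)) =
        ∑ i, p (θ s) i * Real.exp (η * (y i * ⟪G (θ s), x i⟫)) := by
      rw [hLsum]
      refine Finset.sum_congr rfl fun i _ => ?_
      have harg2 : -(y i * ⟪θ s, x i⟫) + η * (y i * ⟪G (θ s), x i⟫) =
          -(y i * ⟪θ s - η • G (θ s), x i⟫) := by
        rw [inner_sub_left, real_inner_smul_left]
        ring
      show (1 / (n:ℝ) * w i) * Real.exp (-(y i * ⟪θ s - η • G (θ s), x i⟫)) =
        (1 / (n:ℝ) * w i) * Real.exp (-(y i * ⟪θ s, x i⟫)) *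
          Real.exp (η * (y i * ⟪G (θ s), x i⟫))
      conv_rhs => rw [mul_assoc, ← Real.exp_add, harg2]
    rw [hLθ', hLsum (θ s)]
    have hηL' : η * ∑ i, p (θ s) i ≤ 1 := by
      rw [← hLsum]
      exact hηL s
    exact descent_sum (p (θ s)) (hp0 (θ s)) x hx y habsy η hη hηL' (G (θ s)) rfl
  have hmono : ∀ s : ℕ, L (θ (s + 1)) ≤ L (θ s) := by
    intro s
    have h := hdesc s
    have h2 : 0 ≤ η / 2 * ‖G (θ s)‖ ^ 2 := by positivity
    linarith
  -- per-step distance inequality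
  have hstepineq : ∀ (u : EuclideanSpace ℝ (Fin d)) (s : ℕ),
      ‖θ (s + 1) - u‖ ^ 2 ≤ ‖θ s - u‖ ^ 2 - 2 * η * (L (θ (s + 1)) - L u) := by
    intro u s
    rw [hstep s]
    have hid : θ s - η • G (θ s) - u = (θ s - u) - η • G (θ s) := by abel
    rw [hid, norm_sub_sq_real, real_inner_smul_right, norm_smul]
    have hns : (|η| * ‖G (θ s)‖) ^ 2 = η ^ 2 * ‖G (θ s)‖ ^ 2 := by
      rw [mul_pow, sq_abs]
    rw [Real.norm_eq_abs, hns]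
    have e : ⟪G (θ s), u - θ s⟫ = -⟪θ s - u, G (θ s)⟫ := by
      rw [real_inner_comm, show u - θ s = -(θ s - u) by abel, inner_neg_left]
    have hcv := hconv (θ s) u
    rw [e] at hcv
    have hds := hdesc s
    rw [hstep s] at hds
    nlinarith [hcv, hds, hη, sq_nonneg ‖G (θ s)‖]
  -- telescoped bound
  have htel : ∀ (u : EuclideanSpace ℝ (Fin d)) (s : ℕ),
      2 * η * s * (L (θ s) - L u) ≤ ‖u‖ ^ 2 - ‖θ s - u‖ ^ 2 := by
    intro u s
    induction s with
    | zero => simp [hθ0]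
    | succ s ih =>
      have h1 := hstepineq u s
      have h2 := hmono s
      have h3 : 0 ≤ 2 * η * (s:ℝ) := by positivity
      have h4 := mul_le_mul_of_nonneg_left h2 h3
      push_cast
      nlinarith [ih, h1, h4, hη]
  -- final assembly
  intro t ht
  have htR : (1:ℝ) ≤ (t:ℝ) := by exact_mod_cast ht
  have htpos : (0:ℝ) < (t:ℝ) := by linarith
  have hlt0 : 0 ≤ Real.log t := Real.log_nonneg htR
  set lt := Real.log t with hltdef
  set u : EuclideanSpace ℝ (Fin d) := θt + (lt / γsep) • θss with hudef
  -- margins of θss on N vanish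
  have hNss : ∀ j, j ∉ S → y j * ⟪θss, x j⟫ = 0 := by
    intro j hj
    rcases eq_or_lt_of_le (hmarginN j hj) with h | h
    · exact h.symm
    · obtain ⟨k, hk, hklt⟩ := hSmax θss ⟨j, hj, h⟩
      linarith [hmarginN k hk]
  have hinner_u : ∀ i, ⟪u, x i⟫ = ⟪θt, x i⟫ + (lt / γsep) * ⟪θss, x i⟫ := by
    intro i
    rw [hudef, inner_add_left, real_inner_smul_left]
  -- LN at minimizer bounds the infimum
  have hLNle : ∀ θ' : EuclideanSpace ℝ (Fin d), LN θ' ≤ L θ' := by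
    intro θ'
    rw [hLN, hL]
    apply mul_le_mul_of_nonneg_left _ (by positivity : (0:ℝ) ≤ 1 / (n:ℝ))
    apply Finset.sum_le_sum_of_subset_of_nonneg (Finset.subset_univ Sᶜ)
    intro i _ _
    exact mul_nonneg (hwpos i).le (Real.exp_pos _).le
  have hinf : LN θt ≤ ⨅ θ' : EuclideanSpace ℝ (Fin d), L θ' :=
    le_ciInf fun θ' => (hθt θ').trans (hLNle θ')
  -- bound L u
  have hLu : L u ≤ LN θt + M * Real.exp ‖θt‖ / (t:ℝ) := by
    rw [hL u]
    rw [← Finset.sum_add_sum_compl S (fun i => w i * Real.exp (-(y i * ⟪u, x i⟫))), mul_add]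
    have part2 : (1 / (n:ℝ)) * ∑ j ∈ Sᶜ, w j * Real.exp (-(y j * ⟪u, x j⟫)) = LN θt := by
      rw [hLN]
      congr 1
      refine Finset.sum_congr rfl fun j hj => ?_
      have hjS : j ∉ S := Finset.mem_compl.mp hj
      have hz := hNss j hjS
      congr 2
      rw [hinner_u j]
      linear_combination (-(lt / γsep)) * hz
    have part1 : (1 / (n:ℝ)) * ∑ i ∈ S, w i * Real.exp (-(y i * ⟪u, x i⟫)) ≤
        M * Real.exp ‖θt‖ / (t:ℝ) := by
      have hterm : ∀ i ∈ S, w i * Real.exp (-(y i * ⟪u, x i⟫)) ≤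
          M * (Real.exp ‖θt‖ / (t:ℝ)) := by
        intro i hiS
        have hb1 : -‖θt‖ ≤ y i * ⟪θt, x i⟫ := by
          have habs : |y i * ⟪θt, x i⟫| ≤ ‖θt‖ := by
            rw [abs_mul, habsy i, one_mul]
            calc |⟪θt, x i⟫| ≤ ‖θt‖ * ‖x i‖ := abs_real_inner_le_norm θt (x i)
              _ ≤ ‖θt‖ * 1 := mul_le_mul_of_nonneg_left (hx i) (norm_nonneg θt)
              _ = ‖θt‖ := mul_one _
          linarith [neg_abs_le (y i * ⟪θt, x i⟫), abs_nonneg (y i * ⟪θt, x i⟫),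
            neg_le_of_abs_le habs]
        have hb2 : lt ≤ (lt / γsep) * (y i * ⟪θss, x i⟫) := by
          have hdiv : 0 ≤ lt / γsep := div_nonneg hlt0 hγsep.le
          calc lt = (lt / γsep) * γsep := by
                field_simp
            _ ≤ (lt / γsep) * (y i * ⟪θss, x i⟫) :=
                mul_le_mul_of_nonneg_left (hmarginS i hiS) hdiv
        have hmarg : lt - ‖θt‖ ≤ y i * ⟪u, x i⟫ := by
          rw [hinner_u i]
          have : y i * (⟪θt, x i⟫ + lt / γsep * ⟪θss, x i⟫) =
              y i * ⟪θt, x i⟫ + (lt / γsep) * (y i * ⟪θss, x i⟫) := by ring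
          rw [this]
          linarith
        have hexp : Real.exp (-(y i * ⟪u, x i⟫)) ≤ Real.exp ‖θt‖ / (t:ℝ) := by
          have h1 : Real.exp (-(y i * ⟪u, x i⟫)) ≤ Real.exp (‖θt‖ - lt) :=
            Real.exp_le_exp.mpr (by linarith)
          rwa [Real.exp_sub, hltdef, Real.exp_log htpos] at h1
        exact mul_le_mul (hw i).2 hexp (Real.exp_pos _).le hM0.le
      calc (1 / (n:ℝ)) * ∑ i ∈ S, w i * Real.exp (-(y i * ⟪u, x i⟫)) ≤
          (1 / (n:ℝ)) * ∑ _i ∈ S, M * (Real.exp ‖θt‖ / (t:ℝ)) := by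
            apply mul_le_mul_of_nonneg_left (Finset.sum_le_sum hterm) (by positivity)
        _ = (1 / (n:ℝ)) * (S.card * (M * (Real.exp ‖θt‖ / (t:ℝ)))) := by
            rw [Finset.sum_const, nsmul_eq_mul]
        _ ≤ (1 / (n:ℝ)) * ((n:ℝ) * (M * (Real.exp ‖θt‖ / (t:ℝ)))) := by
            have hcard : (S.card : ℝ) ≤ (n:ℝ) := by
              exact_mod_cast (S.card_le_univ).trans_eq (Finset.card_fin n)
            have hC : (0:ℝ) ≤ M * (Real.exp ‖θt‖ / (t:ℝ)) := by positivity
            apply mul_le_mul_of_nonneg_left _ (by positivity)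
            exact mul_le_mul_of_nonneg_right hcard hC
        _ = M * Real.exp ‖θt‖ / (t:ℝ) := by
            rw [← mul_assoc, one_div, inv_mul_cancel₀ (ne_of_gt hnR), one_mul]
            ring
    linarith [part1, part2.le, part2.ge]
  -- norm of u
  have hunorm : ‖u‖ ≤ ‖θt‖ + lt / γsep := by
    rw [hudef]
    calc ‖θt + (lt / γsep) • θss‖ ≤ ‖θt‖ + ‖(lt / γsep) • θss‖ := norm_add_le _ _
      _ = ‖θt‖ + lt / γsep := by
          rw [norm_smul, Real.norm_eq_abs, hθssnorm, mul_one,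
            abs_of_nonneg (div_nonneg hlt0 hγsep.le)]
  have husq : ‖u‖ ^ 2 ≤ (‖θt‖ + lt / γsep) ^ 2 :=
    pow_le_pow_left₀ (norm_nonneg u) hunorm 2
  -- combine
  have hkey := htel u t
  have h2ηt : (0:ℝ) < 2 * η * (t:ℝ) := by positivity
  have hmain : L (θ t) - L u ≤ (‖θt‖ + lt / γsep) ^ 2 / (2 * η * (t:ℝ)) := by
    rw [le_div_iff₀ h2ηt]
    have hnn : 0 ≤ ‖θ t - u‖ ^ 2 := sq_nonneg _
    calc (L (θ t) - L u) * (2 * η * (t:ℝ)) = 2 * η * (t:ℝ) * (L (θ t) - L u) := by ring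
      _ ≤ ‖u‖ ^ 2 - ‖θ t - u‖ ^ 2 := hkey
      _ ≤ (‖θt‖ + lt / γsep) ^ 2 := by linarith
  linarith [hmain, hLu, hinf]
end
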